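/- arXiv:1608.06114 — 8 statements merged into one kernel-verified Lean document; each statement's English description precedes it below -/
import Mathlib

section
/- For n ≥ 6, the maximum number of edges in an intersecting 3-uniform hypergraph on n vertices is binomial(n-1, 2), attained by the full star. -/
/-! The upper bound is the Erdős–Ko–Rado theorem, applicable since `3 ≤ n / 2`, transported
from `Fin n` to `V`. A triple of the star at `x` is `x` together with one of the
`(n - 1).choose 2` pairs of other vertices. -/

open Finset

theorem Finset.erdos_ko_rado_fintype {V : Type*} [Fintype V] [DecidableEq V] {𝒜 : Finset (Finset V)} {r : ℕ}
    (h𝒜 : (𝒜 : Set (Finset V)).Intersecting) (hsized : (𝒜 : Set (Finset V)).Sized r)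
    (hr : r ≤ Fintype.card V / 2) :
    #𝒜 ≤ (Fintype.card V - 1).choose (r - 1) := by
  let φ : Finset V ↪ Finset (Fin (Fintype.card V)) :=
    (Fintype.equivFin V).finsetCongr.toEmbedding
  have hφ_intersecting : (↑(𝒜.map φ) : Set (Finset (Fin (Fintype.card V)))).Intersecting := by
    simp only [coe_map, Set.Intersecting, Set.forall_mem_image]
    intro a ha b hb
    simpa [φ, Equiv.finsetCongr_apply, disjoint_map] using h𝒜 ha hb
  have hφ_sized : (↑(𝒜.map φ) : Set (Finset (Fin (Fintype.card V)))).Sized r := by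
    simp only [coe_map, Set.Sized, Set.forall_mem_image]
    intro a ha
    simpa [φ, Equiv.finsetCongr_apply] using hsized ha
  simpa using erdos_ko_rado hφ_intersecting hφ_sized hr

theorem Finset.card_filter_mem_powersetCard_succ_univ {V : Type*} [Fintype V] [DecidableEq V]
    (x : V) (k : ℕ) :
    #{e ∈ powersetCard (k + 1) univ | x ∈ e} = (Fintype.card V - 1).choose k := by
  simpa [singleton_subset_iff] using
    card_filter_powersetCard_subset {x} univ (k + 1) (subset_univ _) (by simp)

/-- Erdős–Ko–Rado for triple systems: for `n ≥ 6`, an intersecting 3-uniform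
hypergraph on `n` vertices has at most `(n-1).choose 2` edges, and for every
vertex `x` the full star at `x` is intersecting and attains this bound. -/
theorem ekr_triple_systems {V : Type*} [Fintype V] [DecidableEq V] (n : ℕ)
    (hn : 6 ≤ n) (hcard : Fintype.card V = n) :
    (∀ H : Finset (Finset V),
      (∀ e ∈ H, e.card = 3) →
      (∀ e ∈ H, ∀ f ∈ H, (e ∩ f).Nonempty) →
      H.card ≤ (n - 1).choose 2) ∧
    (∀ x : V,
      (∀ e ∈ (Finset.univ.powersetCard 3).filter (fun e => x ∈ e),
        ∀ f ∈ (Finset.univ.powersetCard 3).filter (fun e => x ∈ e),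
        (e ∩ f).Nonempty) ∧
      ((Finset.univ.powersetCard 3).filter (fun e => x ∈ e)).card
        = (n - 1).choose 2) := by
  subst hcard
  refine ⟨fun H h3 hint => ?_, fun x => ⟨fun e he f hf => ?_, ?_⟩⟩
  · exact erdos_ko_rado_fintype
      (fun e he f hf => not_disjoint_iff_nonempty_inter.2 (hint e he f hf)) h3 (by omega)
  · exact ⟨x, mem_inter.2 ⟨(mem_filter.1 he).2, (mem_filter.1 hf).2⟩⟩
  · exact card_filter_mem_powersetCard_succ_univ x 2
end

section
/- For n ≥ 7, if H is an intersecting 3-uniform hypergraph on n vertices with binomial(n-1, 2) edges, then H is a full star, i.e., there is a vertex contained in every edge of H. -/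
set_option maxHeartbeats 1000000
set_option maxRecDepth 10000

namespace EkrStarAux

open Finset

variable {V : Type*} [DecidableEq V]

lemma tri_perm (w u v : V) : ({w, u, v} : Finset V) = {w, v, u} := by
  ext t; simp only [Finset.mem_insert, Finset.mem_singleton]; tauto

lemma tri_perm12 (u v w : V) : ({u, v, w} : Finset V) = {v, u, w} := by
  ext t; simp only [Finset.mem_insert, Finset.mem_singleton]; tauto

lemma shape3 {e : Finset V} {w : V} (he3 : e.card = 3) (hw : w ∈ e) :
    ∃ u v, u ≠ v ∧ w ≠ u ∧ w ≠ v ∧ e = {w, u, v} := by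
  have h2 : (e.erase w).card = 2 := by rw [Finset.card_erase_of_mem hw, he3]
  obtain ⟨u, v, huv, he'⟩ := Finset.card_eq_two.mp h2
  have hu : u ∈ e.erase w := he' ▸ Finset.mem_insert_self _ _
  have hv : v ∈ e.erase w := he' ▸ Finset.mem_insert_of_mem (Finset.mem_singleton_self _)
  refine ⟨u, v, huv, fun h => (Finset.notMem_erase w e) (h ▸ hu),
    fun h => (Finset.notMem_erase w e) (h ▸ hv), ?_⟩
  rw [← Finset.insert_erase hw, he']

lemma shape3' {e : Finset V} {x y : V} (he3 : e.card = 3) (hx : x ∈ e) (hy : y ∈ e)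
    (hxy : x ≠ y) : ∃ t, x ≠ t ∧ y ≠ t ∧ e = {x, y, t} := by
  obtain ⟨u, v, huv, hxu, hxv, he⟩ := shape3 he3 hx
  have hy' : y ∈ ({x, u, v} : Finset V) := he ▸ hy
  simp only [Finset.mem_insert, Finset.mem_singleton] at hy'
  rcases hy' with h | h | h
  · exact absurd h.symm hxy
  · subst h
    exact ⟨v, hxv, huv, he⟩
  · subst h
    exact ⟨u, hxu, fun hyu => huv hyu.symm, he.trans (tri_perm x u y)⟩

lemma pick {e s : Finset V} (h : (e ∩ s).Nonempty) : ∃ x ∈ e, x ∈ s := by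
  obtain ⟨x, hx⟩ := h
  rw [Finset.mem_inter] at hx
  exact ⟨x, hx.1, hx.2⟩

lemma edge_shape {e : Finset V} {w z p p' q q' : V}
    (he3 : e.card = 3) (hw : w ∈ e)
    (hP : (e ∩ {z, p, p'}).Nonempty) (hQ : (e ∩ {z, q, q'}).Nonempty)
    (hwz : w ≠ z) (hwp : w ≠ p) (hwp' : w ≠ p') (hwq : w ≠ q) (hwq' : w ≠ q')
    (hpq : p ≠ q) (hpq' : p ≠ q') (hp'q : p' ≠ q) (hp'q' : p' ≠ q') :
    (∃ u, w ≠ u ∧ z ≠ u ∧ e = {w, z, u}) ∨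
    (∃ u v, (u = p ∨ u = p') ∧ (v = q ∨ v = q') ∧ e = {w, u, v}) := by
  obtain ⟨u, v, huv, hwu, hwv, rfl⟩ := shape3 he3 hw
  by_cases hz : z ∈ ({w, u, v} : Finset V)
  · left
    simp only [mem_insert, mem_singleton] at hz
    rcases hz with rfl | rfl | rfl
    · exact absurd rfl hwz
    · exact ⟨v, hwv, huv, rfl⟩
    · exact ⟨u, hwu, fun h => huv h.symm, tri_perm w u z⟩
  · obtain ⟨x, hxe, hxP⟩ := pick hP
    obtain ⟨y, hye, hyQ⟩ := pick hQ
    simp only [mem_insert, mem_singleton] at hxe hxP hye hyQ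
    right
    have hxP' : x = p ∨ x = p' := by
      rcases hxP with rfl | h | h
      · exact absurd (by simpa using hxe) hz
      · exact Or.inl h
      · exact Or.inr h
    have hyQ' : y = q ∨ y = q' := by
      rcases hyQ with rfl | h | h
      · exact absurd (by simpa using hye) hz
      · exact Or.inl h
      · exact Or.inr h
    have hxuv : x = u ∨ x = v := by
      rcases hxe with rfl | h | h
      · rcases hxP' with rfl | rfl
        · exact absurd rfl hwp
        · exact absurd rfl hwp'
      · exact Or.inl h
      · exact Or.inr h
    have hyuv : y = u ∨ y = v := by
      rcases hye with rfl | h | h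
      · rcases hyQ' with rfl | rfl
        · exact absurd rfl hwq
        · exact absurd rfl hwq'
      · exact Or.inl h
      · exact Or.inr h
    have hxy : x ≠ y := by
      rcases hxP' with rfl | rfl <;> rcases hyQ' with rfl | rfl <;> assumption
    refine ⟨x, y, hxP', hyQ', ?_⟩
    rcases hxuv with h1 | h1 <;> rcases hyuv with h2 | h2
    · exact absurd (h1.trans h2.symm) hxy
    · rw [h1, h2]
    · rw [h1, h2]
      exact tri_perm w u v
    · exact absurd (h1.trans h2.symm) hxy

lemma pair_disj {p q r s : V} (h1 : p ≠ r) (h2 : p ≠ s) (h3 : q ≠ r) (h4 : q ≠ s) :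
    ∀ x ∈ ({p, q} : Finset V), x ∉ ({r, s} : Finset V) := by
  intro x hx
  simp only [Finset.mem_insert, Finset.mem_singleton] at hx ⊢
  rcases hx with rfl | rfl
  · simp [h1, h2]
  · simp [h3, h4]

lemma tri_tri_empty {p1 p2 p3 q1 q2 q3 : V}
    (h11 : p1 ≠ q1) (h12 : p1 ≠ q2) (h13 : p1 ≠ q3)
    (h21 : p2 ≠ q1) (h22 : p2 ≠ q2) (h23 : p2 ≠ q3)
    (h31 : p3 ≠ q1) (h32 : p3 ≠ q2) (h33 : p3 ≠ q3)
    (hne : (({p1, p2, p3} : Finset V) ∩ {q1, q2, q3}).Nonempty) : False := by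
  obtain ⟨x, hx1, hx2⟩ := pick hne
  simp only [Finset.mem_insert, Finset.mem_singleton] at hx1 hx2
  rcases hx1 with rfl | rfl | rfl <;> rcases hx2 with rfl | rfl | rfl <;> tauto

lemma third_mem {p1 p2 t q1 q2 q3 : V}
    (h11 : p1 ≠ q1) (h12 : p1 ≠ q2) (h13 : p1 ≠ q3)
    (h21 : p2 ≠ q1) (h22 : p2 ≠ q2) (h23 : p2 ≠ q3)
    (hne : (({p1, p2, t} : Finset V) ∩ {q1, q2, q3}).Nonempty) :
    t = q1 ∨ t = q2 ∨ t = q3 := by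
  obtain ⟨x, hx1, hx2⟩ := pick hne
  simp only [Finset.mem_insert, Finset.mem_singleton] at hx1 hx2
  rcases hx1 with rfl | rfl | rfl <;> tauto

lemma card_le2 (x y : V) : ({x, y} : Finset V).card ≤ 2 :=
  (Finset.card_insert_le _ _).trans (by simp)

lemma card_le3 {α : Type*} [DecidableEq α] (x y z : α) : ({x, y, z} : Finset α).card ≤ 3 := by
  have h := Finset.card_insert_le x ({y, z} : Finset α)
  have h2 := card_le2 y z
  omega

lemma card_le4 {α : Type*} [DecidableEq α] (x y z w : α) :
    ({x, y, z, w} : Finset α).card ≤ 4 := by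
  have h := Finset.card_insert_le x ({y, z, w} : Finset α)
  have h2 := card_le3 y z w
  omega

lemma card_le5 {α : Type*} [DecidableEq α] (x y z w v : α) :
    ({x, y, z, w, v} : Finset α).card ≤ 5 := by
  have h := Finset.card_insert_le x ({y, z, w, v} : Finset α)
  have h2 := card_le4 y z w v
  omega

lemma card_le6 {α : Type*} [DecidableEq α] (x y z w v u : α) :
    ({x, y, z, w, v, u} : Finset α).card ≤ 6 := by
  have h := Finset.card_insert_le x ({y, z, w, v, u} : Finset α)
  have h2 := card_le5 y z w v u
  omega

lemma card3_eq {x y t : V} (h1 : x ≠ y) (h2 : x ≠ t) (h3 : y ≠ t) :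
    ({x, y, t} : Finset V).card = 3 := by
  rw [Finset.card_insert_of_notMem (by simp [h1, h2]),
    Finset.card_insert_of_notMem (by simp [h3]), Finset.card_singleton]

lemma cross_false {H : Finset (Finset V)}
    (hi : ∀ e ∈ H, ∀ f ∈ H, (e ∩ f).Nonempty)
    {P Q : Finset V} {w w' : V} (h1 : insert w P ∈ H) (h2 : insert w' Q ∈ H)
    (hww' : w ≠ w') (hwQ : w ∉ Q) (hw'P : w' ∉ P) (hPQ : ∀ x ∈ P, x ∉ Q) : False := by
  obtain ⟨x, hx1, hx2⟩ := pick (hi _ h1 _ h2)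
  rw [Finset.mem_insert] at hx1 hx2
  rcases hx1 with rfl | hx1
  · rcases hx2 with h | h
    · exact hww' h
    · exact hwQ h
  · rcases hx2 with rfl | h
    · exact hw'P hx1
    · exact hPQ x hx1 h

theorem seven_decide : ∀ f g : Fin 7 → Bool,
    5 ≤ (Finset.univ.filter fun i => f i = true).card →
    5 ≤ (Finset.univ.filter fun i => g i = true).card →
    (∀ p ∈ [((0:Fin 7),(5:Fin 7)),(0,6),(1,3),(1,4),(2,4),(2,6),(3,6),(4,5)],
      ¬(f p.1 = true ∧ g p.2 = true) ∧ ¬(g p.1 = true ∧ f p.2 = true)) → False := by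
  decide


/-- EKR for 3-uniform intersecting families on an arbitrary fintype. -/
theorem ekr3 {α : Type*} [Fintype α] [DecidableEq α] (F : Finset (Finset α))
    (hu : ∀ e ∈ F, e.card = 3)
    (hi : ∀ e ∈ F, ∀ f ∈ F, (e ∩ f).Nonempty)
    (h6 : 6 ≤ Fintype.card α) :
    F.card ≤ (Fintype.card α - 1).choose 2 := by
  set m := Fintype.card α with hm
  let e : α ≃ Fin m := Fintype.equivFinOfCardEq rfl
  let G : Finset (Finset (Fin m)) := F.image (Finset.map e.toEmbedding)
  have hinj : Function.Injective (Finset.map e.toEmbedding) := Finset.map_injective _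
  have hcardG : G.card = F.card := Finset.card_image_of_injective _ hinj
  have hGi : (G : Set (Finset (Fin m))).Intersecting := by
    intro s hs t ht
    simp only [G, coe_image, Set.mem_image, mem_coe] at hs ht
    obtain ⟨s0, hs0, rfl⟩ := hs
    obtain ⟨t0, ht0, rfl⟩ := ht
    obtain ⟨x, hx⟩ := hi s0 hs0 t0 ht0
    rw [mem_inter] at hx
    rw [Finset.disjoint_left]
    intro hdisj
    exact hdisj (mem_map_of_mem _ hx.1) (mem_map_of_mem _ hx.2)
  have hGs : (G : Set (Finset (Fin m))).Sized 3 := by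
    intro s hs
    simp only [G, coe_image, Set.mem_image, mem_coe] at hs
    obtain ⟨s0, hs0, rfl⟩ := hs
    rw [Finset.card_map]; exact hu s0 hs0
  have := Finset.erdos_ko_rado hGi hGs (by omega : 3 ≤ m / 2)
  norm_num at this
  omega

/-- every vertex has degree at least n-2 in an extremal family -/
theorem mindeg {V : Type*} [Fintype V] [DecidableEq V] (n : ℕ)
    (hn : 7 ≤ n) (hcard : Fintype.card V = n) (H : Finset (Finset V))
    (huniform : ∀ e ∈ H, e.card = 3)
    (hint : ∀ e ∈ H, ∀ f ∈ H, (e ∩ f).Nonempty)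
    (hsize : H.card = (n - 1).choose 2) (v : V) :
    n - 2 ≤ (H.filter (fun e => v ∈ e)).card := by
  classical
  have hsplit := Finset.card_filter_add_card_filter_not (s := H)
    (p := fun e => v ∈ e)
  set Hv := H.filter (fun e => v ∈ e)
  set Hn := H.filter (fun e => ¬ v ∈ e) with hHn
  -- map Hn into finsets of the subtype
  have hsub : ∀ e ∈ Hn, ∀ x ∈ e, x ≠ v := by
    intro e he x hx
    rw [hHn, mem_filter] at he
    exact fun h => he.2 (h ▸ hx)
  let π : Finset V → Finset {x : V // x ≠ v} := fun s => s.subtype (fun x => x ≠ v)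
  have hback : ∀ e ∈ Hn, (π e).map (Function.Embedding.subtype _) = e := by
    intro e he
    rw [Finset.subtype_map]
    exact Finset.filter_true_of_mem (hsub e he)
  have hcards : ∀ e ∈ Hn, (π e).card = e.card := by
    intro e he
    have := congrArg Finset.card (hback e he)
    rwa [Finset.card_map] at this
  have hinj : Set.InjOn π Hn := by
    intro s hs t ht h
    have := congrArg (Finset.map (Function.Embedding.subtype (fun x => x ≠ v))) h
    rwa [hback s hs, hback t ht] at this
  set G := Hn.image π with hG
  have hcardG : G.card = Hn.card := Finset.card_image_of_injOn hinj
  have hcs : Fintype.card {x : V // x ≠ v} = n - 1 := by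
    have : Fintype.card {x : V // x = v} = 1 := Fintype.card_subtype_eq v
    have h2 := Fintype.card_subtype_compl (fun x : V => x = v)
    simp only [this, hcard] at h2
    exact h2
  have hEKR : G.card ≤ (n - 2).choose 2 := by
    have := ekr3 G (fun e he => by
        rw [hG, mem_image] at he
        obtain ⟨e0, he0, rfl⟩ := he
        rw [hcards e0 he0]; exact huniform e0 (mem_filter.mp he0).1)
      (fun e he f hf => by
        rw [hG, mem_image] at he hf
        obtain ⟨e0, he0, rfl⟩ := he
        obtain ⟨f0, hf0, rfl⟩ := hf
        obtain ⟨x, hx⟩ := hint e0 (mem_filter.mp he0).1 f0 (mem_filter.mp hf0).1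
        rw [mem_inter] at hx
        exact ⟨⟨x, hsub e0 he0 x hx.1⟩, by
          rw [mem_inter, Finset.mem_subtype, Finset.mem_subtype]
          exact ⟨hx.1, hx.2⟩⟩)
      (by rw [hcs]; omega)
    rwa [hcs] at this
  have hchoose : (n - 1).choose 2 = (n - 2).choose 2 + (n - 2) := by
    have h1 : n - 1 = (n - 2) + 1 := by omega
    have key := Nat.choose_succ_succ (n-2) 1
    norm_num at key
    have h2 : n - 2 + 1 = n - 1 := by omega
    rw [h2] at key
    omega
  omega


section Main

variable {V : Type*} [Fintype V] [DecidableEq V] {H : Finset (Finset V)}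

/-- The key contradiction lemma: configuration A = {z,a,a'}, B = {z,b,b'}, C = {a,b,c}
with c outside everything, w outside everything, and {w,a,b'} ∈ H is impossible
when every vertex has degree ≥ 5. -/
lemma i7b (hu : ∀ e ∈ H, e.card = 3) (hi : ∀ e ∈ H, ∀ f ∈ H, (e ∩ f).Nonempty)
    (hdeg5 : ∀ v : V, 5 ≤ (H.filter (fun e => v ∈ e)).card)
    (z a a' b b' c w : V)
    (hza : z ≠ a) (hza' : z ≠ a') (hzb : z ≠ b) (hzb' : z ≠ b')
    (haa' : a ≠ a') (hab : a ≠ b) (hab' : a ≠ b') (ha'b : a' ≠ b) (ha'b' : a' ≠ b')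
    (hbb' : b ≠ b')
    (hcz : c ≠ z) (hca : c ≠ a) (hca' : c ≠ a') (hcb : c ≠ b) (hcb' : c ≠ b')
    (hwz : w ≠ z) (hwa : w ≠ a) (hwa' : w ≠ a') (hwb : w ≠ b) (hwb' : w ≠ b')
    (hwc : w ≠ c)
    (hA : ({z, a, a'} : Finset V) ∈ H) (hB : ({z, b, b'} : Finset V) ∈ H)
    (hC : ({a, b, c} : Finset V) ∈ H) (hP : ({w, a, b'} : Finset V) ∈ H) : False := by
  have hBperm : ({b, z, b'} : Finset V) ∈ H := (tri_perm12 z b b') ▸ hB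
  have hCperm : ({b, a, c} : Finset V) ∈ H := (tri_perm12 a b c) ▸ hC
  -- Step 1 : {z,w,c} ∉ H
  have hzwc : ({z, w, c} : Finset V) ∉ H := by
    intro hzwc
    have hsub : H.filter (fun e => a' ∈ e) ⊆
        {({a', z, a} : Finset V), {a', b, w}, {a', b', c}} := by
      intro e he'
      rw [Finset.mem_filter] at he'
      obtain ⟨he, ha'e⟩ := he'
      rcases edge_shape (hu e he) ha'e (hi e he _ hBperm) (hi e he _ hCperm)
          ha'b hza'.symm ha'b' haa'.symm hca'.symm hza hcz.symm hab'.symm hcb'.symm with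
        ⟨t, h1t, h2t, rfl⟩ | ⟨x, y, hx, hy, rfl⟩
      · -- e = {a', b, t}
        have ht1 : t = w ∨ t = a ∨ t = b' :=
          third_mem hwa'.symm haa'.symm ha'b' hwb.symm hab.symm hbb' (hi _ he _ hP)
        have ht2 : t = z ∨ t = w ∨ t = c :=
          third_mem hza'.symm hwa'.symm hca'.symm hzb.symm hwb.symm hcb.symm
            (hi _ he _ hzwc)
        rcases ht1 with h | h | h <;> obtain rfl := h.symm
        · exact Finset.mem_insert_of_mem (Finset.mem_insert_self _ _)
        · rcases ht2 with h | h | h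
          · exact absurd h.symm hza
          · exact absurd h.symm hwa
          · exact absurd h.symm hca
        · rcases ht2 with h | h | h
          · exact absurd h.symm hzb'
          · exact absurd h.symm hwb'
          · exact absurd h.symm hcb'
      · rcases hx with h | h <;> rcases hy with h' | h' <;> obtain rfl := h.symm <;> obtain rfl := h'.symm
        · -- {a', z, a}
          exact Finset.mem_insert_self _ _
        · -- {a', z, c} : must meet P = {w,a,b'}
          exact absurd (hi _ he _ hP)
            (fun hne => tri_tri_empty hwa'.symm haa'.symm ha'b' hwz.symm hza hzb'
              hwc.symm hca hcb' hne)
        · -- {a', b', a} : must meet {z,w,c}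
          exact absurd (hi _ he _ hzwc)
            (fun hne => tri_tri_empty hza'.symm hwa'.symm hca'.symm hzb'.symm hwb'.symm
              hcb'.symm hza.symm hwa.symm hca.symm hne)
        · -- {a', b', c}
          exact Finset.mem_insert_of_mem (Finset.mem_insert_of_mem (Finset.mem_singleton_self _))
    have h1 := (hdeg5 a').trans (Finset.card_le_card hsub)
    have h2 := card_le3 ({a', z, a} : Finset V) {a', b, w} {a', b', c}
    omega
  -- Step 2 : all five other candidates at w are present; in particular {w,z,a} ∈ H
  have hsub5 : H.filter (fun e => w ∈ e) ⊆
      {({w, z, a} : Finset V), {w, z, b}, {w, a, b}, {w, a, b'}, {w, a', b}} := by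
    intro e he'
    rw [Finset.mem_filter] at he'
    obtain ⟨he, hwe⟩ := he'
    rcases edge_shape (hu e he) hwe (hi e he _ hA) (hi e he _ hB)
        hwz hwa hwa' hwb hwb' hab hab' ha'b ha'b' with
      ⟨t, h1t, h2t, rfl⟩ | ⟨x, y, hx, hy, rfl⟩
    · have ht : t = a ∨ t = b ∨ t = c :=
        third_mem hwa hwb hwc hza hzb hcz.symm (hi _ he _ hC)
      rcases ht with h | h | h <;> obtain rfl := h.symm
      · exact Finset.mem_insert_self _ _
      · exact Finset.mem_insert_of_mem (Finset.mem_insert_self _ _)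
      · exact absurd ((tri_perm12 w z c) ▸ he) hzwc
    · rcases hx with h | h <;> rcases hy with h' | h' <;> obtain rfl := h.symm <;> obtain rfl := h'.symm
      · exact Finset.mem_insert_of_mem (Finset.mem_insert_of_mem (Finset.mem_insert_self _ _))
      · exact Finset.mem_insert_of_mem (Finset.mem_insert_of_mem
          (Finset.mem_insert_of_mem (Finset.mem_insert_self _ _)))
      · exact Finset.mem_insert_of_mem (Finset.mem_insert_of_mem
          (Finset.mem_insert_of_mem (Finset.mem_insert_of_mem (Finset.mem_singleton_self _))))
      · -- {w, a', b'} : must meet C = {a,b,c}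
        exact absurd (hi _ he _ hC)
          (fun hne => tri_tri_empty hwa hwb hwc haa'.symm ha'b hca'.symm
            hab'.symm hbb'.symm hcb'.symm hne)
  have hT5 : (({({w, z, a} : Finset V), {w, z, b}, {w, a, b}, {w, a, b'}, {w, a', b}}) :
      Finset (Finset V)).card ≤ 5 := card_le5 _ _ _ _ _
  have heq := Finset.eq_of_subset_of_card_le hsub5 (hT5.trans (hdeg5 w))
  have hWZA : ({w, z, a} : Finset V) ∈ H := by
    have hmem : ({w, z, a} : Finset V) ∈ H.filter (fun e => w ∈ e) := by
      rw [heq]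
      exact Finset.mem_insert_self _ _
    exact (Finset.mem_filter.mp hmem).1
  -- Step 3 : now a' has degree at most 4
  have hsub4 : H.filter (fun e => a' ∈ e) ⊆
      {({a', z, a} : Finset V), {a', a, b}, {a', a, b'}, {a', b, w}} := by
    intro e he'
    rw [Finset.mem_filter] at he'
    obtain ⟨he, ha'e⟩ := he'
    rcases edge_shape (hu e he) ha'e (hi e he _ hBperm) (hi e he _ hCperm)
        ha'b hza'.symm ha'b' haa'.symm hca'.symm hza hcz.symm hab'.symm hcb'.symm with
      ⟨t, h1t, h2t, rfl⟩ | ⟨x, y, hx, hy, rfl⟩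
    · -- e = {a', b, t}
      have ht1 : t = w ∨ t = a ∨ t = b' :=
        third_mem hwa'.symm haa'.symm ha'b' hwb.symm hab.symm hbb' (hi _ he _ hP)
      have ht2 : t = w ∨ t = z ∨ t = a :=
        third_mem hwa'.symm hza'.symm haa'.symm hwb.symm hzb.symm hab.symm
          (hi _ he _ hWZA)
      rcases ht1 with h | h | h <;> obtain rfl := h.symm
      · exact Finset.mem_insert_of_mem (Finset.mem_insert_of_mem
          (Finset.mem_insert_of_mem (Finset.mem_singleton_self _)))
      · -- e = {a', b, a} = {a', a, b}
        rw [tri_perm a' b a]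
        exact Finset.mem_insert_of_mem (Finset.mem_insert_self _ _)
      · rcases ht2 with h | h | h
        · exact absurd h.symm hwb'
        · exact absurd h.symm hzb'
        · exact absurd h.symm hab'
    · rcases hx with h | h <;> rcases hy with h' | h' <;> obtain rfl := h.symm <;> obtain rfl := h'.symm
      · exact Finset.mem_insert_self _ _
      · -- {a', z, c} : must meet P
        exact absurd (hi _ he _ hP)
          (fun hne => tri_tri_empty hwa'.symm haa'.symm ha'b' hwz.symm hza hzb'
            hwc.symm hca hcb' hne)
      · -- {a', b', a} = {a', a, b'}
        rw [tri_perm a' b' a]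
        exact Finset.mem_insert_of_mem (Finset.mem_insert_of_mem (Finset.mem_insert_self _ _))
      · -- {a', b', c} : must meet {w,z,a}
        exact absurd (hi _ he _ hWZA)
          (fun hne => tri_tri_empty hwa'.symm hza'.symm haa'.symm hwb'.symm hzb'.symm
            hab'.symm hwc.symm hcz hca hne)
  have h1 := (hdeg5 a').trans (Finset.card_le_card hsub4)
  have h2 := card_le4 ({a', z, a} : Finset V) {a', a, b} {a', a, b'} {a', b, w}
  omega

set_option linter.unusedSectionVars false

/-- Subcase c = a' : configuration A = {z,a,a'}, B = {z,b,b'}, C = {a,b,a'} is impossible. -/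
lemma subcase_ii (hu : ∀ e ∈ H, e.card = 3) (hi : ∀ e ∈ H, ∀ f ∈ H, (e ∩ f).Nonempty)
    (hdeg5 : ∀ v : V, 5 ≤ (H.filter (fun e => v ∈ e)).card)
    (z a a' b b' : V)
    (hza : z ≠ a) (hza' : z ≠ a') (hzb : z ≠ b) (hzb' : z ≠ b')
    (haa' : a ≠ a') (hab : a ≠ b) (hab' : a ≠ b') (ha'b : a' ≠ b) (ha'b' : a' ≠ b')
    (hbb' : b ≠ b')
    (hA : ({z, a, a'} : Finset V) ∈ H) (hB : ({z, b, b'} : Finset V) ∈ H)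
    (hC : ({a, b, a'} : Finset V) ∈ H)
    (hW : 2 ≤ (Finset.univ \ ({z, a, a', b, b'} : Finset V)).card) : False := by
  obtain ⟨w, hwW, w', hw'W, hww'⟩ := Finset.one_lt_card.mp hW
  simp only [Finset.mem_sdiff, Finset.mem_univ, true_and, Finset.mem_insert,
    Finset.mem_singleton, not_or] at hwW hw'W
  obtain ⟨hwz, hwa, hwa', hwb, hwb'⟩ := hwW
  obtain ⟨hw'z, hw'a, hw'a', hw'b, hw'b'⟩ := hw'W
  have cls : ∀ u : V, u ≠ z → u ≠ a → u ≠ a' → u ≠ b → u ≠ b' → ∀ e ∈ H, u ∈ e →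
      ∃ i : Fin 7, e = insert u
        ((![{z,a},{z,a'},{z,b},{a,b},{a,b'},{a',b},{a',b'}] : Fin 7 → Finset V) i) := by
    intro u huz hua hua' hub hub' e he hue
    rcases edge_shape (hu e he) hue (hi e he _ hA) (hi e he _ hB)
        huz hua hua' hub hub' hab hab' ha'b ha'b' with
      ⟨t, hut, hzt, rfl⟩ | ⟨x, y, hx, hy, rfl⟩
    · have ht : t = a ∨ t = b ∨ t = a' :=
        third_mem hua hub hua' hza hzb hza' (hi _ he _ hC)
      rcases ht with h | h | h <;> obtain rfl := h.symm
      · exact ⟨0, rfl⟩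
      · exact ⟨2, rfl⟩
      · exact ⟨1, rfl⟩
    · rcases hx with h | h <;> rcases hy with h' | h' <;> obtain rfl := h.symm <;>
        obtain rfl := h'.symm
      · exact ⟨3, rfl⟩
      · exact ⟨4, rfl⟩
      · exact ⟨5, rfl⟩
      · exact ⟨6, rfl⟩
  have hcount : ∀ u : V, u ≠ z → u ≠ a → u ≠ a' → u ≠ b → u ≠ b' →
      5 ≤ (Finset.univ.filter (fun i : Fin 7 => insert u
        ((![{z,a},{z,a'},{z,b},{a,b},{a,b'},{a',b},{a',b'}] : Fin 7 → Finset V) i) ∈ H)).card := by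
    intro u h1 h2 h3 h4 h5
    have hsub : H.filter (fun e => u ∈ e) ⊆
        (Finset.univ.filter (fun i : Fin 7 => insert u
          ((![{z,a},{z,a'},{z,b},{a,b},{a,b'},{a',b},{a',b'}] : Fin 7 → Finset V) i) ∈ H)).image
          (fun i => insert u ((![{z,a},{z,a'},{z,b},{a,b},{a,b'},{a',b},{a',b'}] :
            Fin 7 → Finset V) i)) := by
      intro e he'
      rw [Finset.mem_filter] at he'
      obtain ⟨i, rfl⟩ := cls u h1 h2 h3 h4 h5 e he'.1 he'.2
      exact Finset.mem_image_of_mem _ (Finset.mem_filter.mpr ⟨Finset.mem_univ _, he'.1⟩)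
    calc (5:ℕ) ≤ _ := hdeg5 u
    _ ≤ _ := Finset.card_le_card hsub
    _ ≤ _ := Finset.card_image_le
  -- the eight disjointness facts between copairs
  have d05 : ∀ x ∈ ({z,a} : Finset V), x ∉ ({a',b} : Finset V) := pair_disj hza' hzb haa' hab
  have d06 : ∀ x ∈ ({z,a} : Finset V), x ∉ ({a',b'} : Finset V) := pair_disj hza' hzb' haa' hab'
  have d13 : ∀ x ∈ ({z,a'} : Finset V), x ∉ ({a,b} : Finset V) := pair_disj hza hzb haa'.symm ha'b
  have d14 : ∀ x ∈ ({z,a'} : Finset V), x ∉ ({a,b'} : Finset V) :=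
    pair_disj hza hzb' haa'.symm ha'b'
  have d24 : ∀ x ∈ ({z,b} : Finset V), x ∉ ({a,b'} : Finset V) := pair_disj hza hzb' hab.symm hbb'
  have d26 : ∀ x ∈ ({z,b} : Finset V), x ∉ ({a',b'} : Finset V) :=
    pair_disj hza' hzb' ha'b.symm hbb'
  have d36 : ∀ x ∈ ({a,b} : Finset V), x ∉ ({a',b'} : Finset V) :=
    pair_disj haa' hab' ha'b.symm hbb'
  have d45 : ∀ x ∈ ({a,b'} : Finset V), x ∉ ({a',b} : Finset V) :=
    pair_disj haa' hab ha'b'.symm hbb'.symm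
  -- non-membership of w, w' in the copairs
  have hwn0 : w ∉ ({z,a} : Finset V) := by simp [hwz, hwa]
  have hwn1 : w ∉ ({z,a'} : Finset V) := by simp [hwz, hwa']
  have hwn2 : w ∉ ({z,b} : Finset V) := by simp [hwz, hwb]
  have hwn3 : w ∉ ({a,b} : Finset V) := by simp [hwa, hwb]
  have hwn4 : w ∉ ({a,b'} : Finset V) := by simp [hwa, hwb']
  have hwn5 : w ∉ ({a',b} : Finset V) := by simp [hwa', hwb]
  have hwn6 : w ∉ ({a',b'} : Finset V) := by simp [hwa', hwb']
  have hw'n0 : w' ∉ ({z,a} : Finset V) := by simp [hw'z, hw'a]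
  have hw'n1 : w' ∉ ({z,a'} : Finset V) := by simp [hw'z, hw'a']
  have hw'n2 : w' ∉ ({z,b} : Finset V) := by simp [hw'z, hw'b]
  have hw'n3 : w' ∉ ({a,b} : Finset V) := by simp [hw'a, hw'b]
  have hw'n4 : w' ∉ ({a,b'} : Finset V) := by simp [hw'a, hw'b']
  have hw'n5 : w' ∉ ({a',b} : Finset V) := by simp [hw'a', hw'b]
  have hw'n6 : w' ∉ ({a',b'} : Finset V) := by simp [hw'a', hw'b']
  refine seven_decide
    (fun i => decide (insert w ((![{z,a},{z,a'},{z,b},{a,b},{a,b'},{a',b},{a',b'}] :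
      Fin 7 → Finset V) i) ∈ H))
    (fun i => decide (insert w' ((![{z,a},{z,a'},{z,b},{a,b},{a,b'},{a',b},{a',b'}] :
      Fin 7 → Finset V) i) ∈ H)) ?_ ?_ ?_
  · simpa only [decide_eq_true_eq] using hcount w hwz hwa hwa' hwb hwb'
  · simpa only [decide_eq_true_eq] using hcount w' hw'z hw'a hw'a' hw'b hw'b'
  · intro p hp
    fin_cases hp <;> refine ⟨fun h => ?_, fun h => ?_⟩ <;>
      [ exact cross_false hi (of_decide_eq_true h.1) (of_decide_eq_true h.2) hww' hwn5 hw'n0 d05;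
        exact cross_false hi (of_decide_eq_true h.1) (of_decide_eq_true h.2) hww'.symm hw'n5 hwn0 d05;
        exact cross_false hi (of_decide_eq_true h.1) (of_decide_eq_true h.2) hww' hwn6 hw'n0 d06;
        exact cross_false hi (of_decide_eq_true h.1) (of_decide_eq_true h.2) hww'.symm hw'n6 hwn0 d06;
        exact cross_false hi (of_decide_eq_true h.1) (of_decide_eq_true h.2) hww' hwn3 hw'n1 d13;
        exact cross_false hi (of_decide_eq_true h.1) (of_decide_eq_true h.2) hww'.symm hw'n3 hwn1 d13;
        exact cross_false hi (of_decide_eq_true h.1) (of_decide_eq_true h.2) hww' hwn4 hw'n1 d14;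
        exact cross_false hi (of_decide_eq_true h.1) (of_decide_eq_true h.2) hww'.symm hw'n4 hwn1 d14;
        exact cross_false hi (of_decide_eq_true h.1) (of_decide_eq_true h.2) hww' hwn4 hw'n2 d24;
        exact cross_false hi (of_decide_eq_true h.1) (of_decide_eq_true h.2) hww'.symm hw'n4 hwn2 d24;
        exact cross_false hi (of_decide_eq_true h.1) (of_decide_eq_true h.2) hww' hwn6 hw'n2 d26;
        exact cross_false hi (of_decide_eq_true h.1) (of_decide_eq_true h.2) hww'.symm hw'n6 hwn2 d26;
        exact cross_false hi (of_decide_eq_true h.1) (of_decide_eq_true h.2) hww' hwn6 hw'n3 d36;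
        exact cross_false hi (of_decide_eq_true h.1) (of_decide_eq_true h.2) hww'.symm hw'n6 hwn3 d36;
        exact cross_false hi (of_decide_eq_true h.1) (of_decide_eq_true h.2) hww' hwn5 hw'n4 d45;
        exact cross_false hi (of_decide_eq_true h.1) (of_decide_eq_true h.2) hww'.symm hw'n5 hwn4 d45]

/-- Subcase c outside A ∪ B. -/
lemma subcase_i (hu : ∀ e ∈ H, e.card = 3) (hi : ∀ e ∈ H, ∀ f ∈ H, (e ∩ f).Nonempty)
    (hdeg5 : ∀ v : V, 5 ≤ (H.filter (fun e => v ∈ e)).card)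
    (z a a' b b' c : V)
    (hza : z ≠ a) (hza' : z ≠ a') (hzb : z ≠ b) (hzb' : z ≠ b')
    (haa' : a ≠ a') (hab : a ≠ b) (hab' : a ≠ b') (ha'b : a' ≠ b) (ha'b' : a' ≠ b')
    (hbb' : b ≠ b')
    (hcz : c ≠ z) (hca : c ≠ a) (hca' : c ≠ a') (hcb : c ≠ b) (hcb' : c ≠ b')
    (hA : ({z, a, a'} : Finset V) ∈ H) (hB : ({z, b, b'} : Finset V) ∈ H)
    (hC : ({a, b, c} : Finset V) ∈ H)
    (hW : (Finset.univ \ ({z, a, a', b, b', c} : Finset V)).Nonempty) : False := by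
  obtain ⟨w, hwW⟩ := hW
  simp only [Finset.mem_sdiff, Finset.mem_univ, true_and, Finset.mem_insert,
    Finset.mem_singleton, not_or] at hwW
  obtain ⟨hwz, hwa, hwa', hwb, hwb', hwc⟩ := hwW
  by_cases hP : ({w, a, b'} : Finset V) ∈ H
  · exact i7b hu hi hdeg5 z a a' b b' c w hza hza' hzb hzb' haa' hab hab' ha'b ha'b' hbb'
      hcz hca hca' hcb hcb' hwz hwa hwa' hwb hwb' hwc hA hB hC hP
  · have hP' : ({w, a', b} : Finset V) ∈ H := by
      by_contra hP'
      have hsub : H.filter (fun e => w ∈ e) ⊆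
          {({w, z, a} : Finset V), {w, z, b}, {w, z, c}, {w, a, b}} := by
        intro e he'
        rw [Finset.mem_filter] at he'
        obtain ⟨he, hwe⟩ := he'
        rcases edge_shape (hu e he) hwe (hi e he _ hA) (hi e he _ hB)
            hwz hwa hwa' hwb hwb' hab hab' ha'b ha'b' with
          ⟨t, h1t, h2t, rfl⟩ | ⟨x, y, hx, hy, rfl⟩
        · have ht : t = a ∨ t = b ∨ t = c :=
            third_mem hwa hwb hwc hza hzb hcz.symm (hi _ he _ hC)
          rcases ht with h | h | h <;> obtain rfl := h.symm
          · exact Finset.mem_insert_self _ _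
          · exact Finset.mem_insert_of_mem (Finset.mem_insert_self _ _)
          · exact Finset.mem_insert_of_mem (Finset.mem_insert_of_mem (Finset.mem_insert_self _ _))
        · rcases hx with h | h <;> rcases hy with h' | h' <;> obtain rfl := h.symm <;>
            obtain rfl := h'.symm
          · exact Finset.mem_insert_of_mem (Finset.mem_insert_of_mem
              (Finset.mem_insert_of_mem (Finset.mem_singleton_self _)))
          · exact absurd he hP
          · exact absurd he hP'
          · exact absurd (hi _ he _ hC)
              (fun hne => tri_tri_empty hwa hwb hwc haa'.symm ha'b hca'.symm
                hab'.symm hbb'.symm hcb'.symm hne)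
      have h1 := (hdeg5 w).trans (Finset.card_le_card hsub)
      have h2 := card_le4 ({w, z, a} : Finset V) {w, z, b} {w, z, c} {w, a, b}
      omega
    have hC' : ({b, a, c} : Finset V) ∈ H := (tri_perm12 a b c) ▸ hC
    have hP'' : ({w, b, a'} : Finset V) ∈ H := (tri_perm w a' b) ▸ hP'
    exact i7b hu hi hdeg5 z b b' a a' c w hzb hzb' hza hza' hbb' hab.symm ha'b.symm
      hab'.symm ha'b'.symm haa' hcz hcb hcb' hca hca' hwz hwb hwb' hwa hwa' hwc
      hB hA hC' hP''

/-- Case 1 : two edges meeting in exactly one point exist; this is the main configuration. -/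
lemma case2_main (hu : ∀ e ∈ H, e.card = 3) (hi : ∀ e ∈ H, ∀ f ∈ H, (e ∩ f).Nonempty)
    (hdeg5 : ∀ v : V, 5 ≤ (H.filter (fun e => v ∈ e)).card)
    (hcard7 : 7 ≤ Fintype.card V)
    (z a a' b b' c : V)
    (hza : z ≠ a) (hza' : z ≠ a') (hzb : z ≠ b) (hzb' : z ≠ b')
    (haa' : a ≠ a') (hab : a ≠ b) (hab' : a ≠ b') (ha'b : a' ≠ b) (ha'b' : a' ≠ b')
    (hbb' : b ≠ b')
    (hcz : c ≠ z) (hca : c ≠ a) (hcb : c ≠ b)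
    (hA : ({z, a, a'} : Finset V) ∈ H) (hB : ({z, b, b'} : Finset V) ∈ H)
    (hC : ({a, b, c} : Finset V) ∈ H) : False := by
  have hWcard : ∀ s : Finset V, s.card ≤ 6 → 1 ≤ (Finset.univ \ s).card := by
    intro s hs
    have h1 := Finset.card_sdiff_of_subset (Finset.subset_univ s)
    rw [Finset.card_univ] at h1
    omega
  by_cases h1 : c = a'
  · obtain rfl := h1.symm
    refine subcase_ii hu hi hdeg5 z a a' b b' hza hza' hzb hzb' haa' hab hab' ha'b ha'b' hbb'
      hA hB hC ?_
    have h1 := Finset.card_sdiff_of_subset (Finset.subset_univ ({z, a, a', b, b'} : Finset V))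
    rw [Finset.card_univ] at h1
    have h2 := card_le5 z a a' b b'
    omega
  · by_cases h2 : c = b'
    · obtain rfl := h2.symm
      refine subcase_ii hu hi hdeg5 z b b' a a' hzb hzb' hza hza' hbb' hab.symm ha'b.symm
        hab'.symm ha'b'.symm haa' hB hA ((tri_perm12 a b b') ▸ hC) ?_
      have h1 := Finset.card_sdiff_of_subset (Finset.subset_univ ({z, b, b', a, a'} : Finset V))
      rw [Finset.card_univ] at h1
      have h2 := card_le5 z b b' a a'
      omega
    · refine subcase_i hu hi hdeg5 z a a' b b' c hza hza' hzb hzb' haa' hab hab' ha'b ha'b'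
        hbb' hcz hca (fun h => h1 h) hcb (fun h => h2 h) hA hB hC ?_
      rw [← Finset.card_pos]
      have h3 := Finset.card_sdiff_of_subset (Finset.subset_univ ({z, a, a', b, b', c} : Finset V))
      rw [Finset.card_univ] at h3
      have h4 := card_le6 z a a' b b' c
      omega

/-- Case where all pairs of edges meet in at least two points. -/
lemma case1_main (hu : ∀ e ∈ H, e.card = 3) (hi : ∀ e ∈ H, ∀ f ∈ H, (e ∩ f).Nonempty)
    (hdeg5 : ∀ v : V, 5 ≤ (H.filter (fun e => v ∈ e)).card)
    (hcard7 : 7 ≤ Fintype.card V) (h2H : 1 < H.card)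
    (hall : ∀ A ∈ H, ∀ B ∈ H, (A ∩ B).card ≠ 1) : False := by
  obtain ⟨A, hA, B, hB, hAB⟩ := Finset.one_lt_card.mp h2H
  have hint2 : ∀ e ∈ H, ∀ f ∈ H, 2 ≤ (e ∩ f).card := by
    intro e he f hf
    have h1 := (hi e he f hf).card_pos
    have h2 := hall e he f hf
    omega
  have hABcard : (A ∩ B).card = 2 := by
    have h1 := hint2 A hA B hB
    have h2 : (A ∩ B).card ≤ 3 := by
      have := Finset.card_le_card (Finset.inter_subset_left (s₁ := A) (s₂ := B))
      rw [hu A hA] at this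
      exact this
    rcases Nat.lt_or_ge (A ∩ B).card 3 with h | h
    · omega
    · exfalso
      have hAeq : A ∩ B = A := Finset.eq_of_subset_of_card_le Finset.inter_subset_left
        (by rw [hu A hA]; exact h)
      have hsub : A ⊆ B := hAeq ▸ Finset.inter_subset_right
      exact hAB (Finset.eq_of_subset_of_card_le hsub (by rw [hu A hA, hu B hB]))
  obtain ⟨p, q, hpq, hpqeq⟩ := Finset.card_eq_two.mp hABcard
  have hpAB : p ∈ A ∩ B := hpqeq ▸ Finset.mem_insert_self _ _
  have hqAB : q ∈ A ∩ B := hpqeq ▸ Finset.mem_insert_of_mem (Finset.mem_singleton_self _)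
  rw [Finset.mem_inter] at hpAB hqAB
  obtain ⟨r, hpr, hqr, hAeq⟩ := shape3' (hu A hA) hpAB.1 hqAB.1 hpq
  obtain ⟨s, hps, hqs, hBeq⟩ := shape3' (hu B hB) hpAB.2 hqAB.2 hpq
  have hrB : r ∉ B := by
    intro hrB
    have : r ∈ A ∩ B := Finset.mem_inter.mpr ⟨hAeq ▸ Finset.mem_insert_of_mem
      (Finset.mem_insert_of_mem (Finset.mem_singleton_self _)), hrB⟩
    rw [hpqeq] at this
    simp only [Finset.mem_insert, Finset.mem_singleton] at this
    rcases this with h | h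
    · exact hpr h.symm
    · exact hqr h.symm
  have hsA : s ∉ A := by
    intro hsA
    have : s ∈ A ∩ B := Finset.mem_inter.mpr ⟨hsA, hBeq ▸ Finset.mem_insert_of_mem
      (Finset.mem_insert_of_mem (Finset.mem_singleton_self _))⟩
    rw [hpqeq] at this
    simp only [Finset.mem_insert, Finset.mem_singleton] at this
    rcases this with h | h
    · exact hps h.symm
    · exact hqs h.symm
  have hrs : r ≠ s := fun h => hrB (h ▸ hBeq ▸ Finset.mem_insert_of_mem
    (Finset.mem_insert_of_mem (Finset.mem_singleton_self _)))
  -- every edge contains p and q, or equals {p,r,s} or {q,r,s}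
  have key : ∀ e ∈ H, (p ∈ e ∧ q ∈ e) ∨ e = {p, r, s} ∨ e = {q, r, s} := by
    intro e he
    have h2A := hint2 e he A hA
    have h2B := hint2 e he B hB
    by_cases hp : p ∈ e <;> by_cases hq : q ∈ e
    · exact Or.inl ⟨hp, hq⟩
    · -- q ∉ e : r ∈ e and s ∈ e
      right; left
      have hrse : e ∩ A = {p, r} := by
        apply Finset.eq_of_subset_of_card_le
        · intro x hx
          rw [Finset.mem_inter, hAeq] at hx
          simp only [Finset.mem_insert, Finset.mem_singleton] at hx ⊢
          rcases hx.2 with h | h | h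
          · exact Or.inl h
          · exact absurd (h ▸ hx.1) hq
          · exact Or.inr h
        · have := card_le2 p r
          omega
      have hrse' : e ∩ B = {p, s} := by
        apply Finset.eq_of_subset_of_card_le
        · intro x hx
          rw [Finset.mem_inter, hBeq] at hx
          simp only [Finset.mem_insert, Finset.mem_singleton] at hx ⊢
          rcases hx.2 with h | h | h
          · exact Or.inl h
          · exact absurd (h ▸ hx.1) hq
          · exact Or.inr h
        · have := card_le2 p s
          omega
      have hre : r ∈ e := by
        have : r ∈ e ∩ A := hrse ▸ Finset.mem_insert_of_mem (Finset.mem_singleton_self _)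
        exact (Finset.mem_inter.mp this).1
      have hse : s ∈ e := by
        have : s ∈ e ∩ B := hrse' ▸ Finset.mem_insert_of_mem (Finset.mem_singleton_self _)
        exact (Finset.mem_inter.mp this).1
      have hsub : ({p, r, s} : Finset V) ⊆ e := by
        intro x hx
        simp only [Finset.mem_insert, Finset.mem_singleton] at hx
        rcases hx with rfl | rfl | rfl
        · exact hp
        · exact hre
        · exact hse
      exact (Finset.eq_of_subset_of_card_le hsub
        (by rw [hu e he, card3_eq hpr hps hrs])).symm
    · -- p ∉ e
      right; right
      have hrse : e ∩ A = {q, r} := by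
        apply Finset.eq_of_subset_of_card_le
        · intro x hx
          rw [Finset.mem_inter, hAeq] at hx
          simp only [Finset.mem_insert, Finset.mem_singleton] at hx ⊢
          rcases hx.2 with h | h | h
          · exact absurd (h ▸ hx.1) hp
          · exact Or.inl h
          · exact Or.inr h
        · have := card_le2 q r
          omega
      have hrse' : e ∩ B = {q, s} := by
        apply Finset.eq_of_subset_of_card_le
        · intro x hx
          rw [Finset.mem_inter, hBeq] at hx
          simp only [Finset.mem_insert, Finset.mem_singleton] at hx ⊢
          rcases hx.2 with h | h | h
          · exact absurd (h ▸ hx.1) hp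
          · exact Or.inl h
          · exact Or.inr h
        · have := card_le2 q s
          omega
      have hre : r ∈ e := by
        have : r ∈ e ∩ A := hrse ▸ Finset.mem_insert_of_mem (Finset.mem_singleton_self _)
        exact (Finset.mem_inter.mp this).1
      have hse : s ∈ e := by
        have : s ∈ e ∩ B := hrse' ▸ Finset.mem_insert_of_mem (Finset.mem_singleton_self _)
        exact (Finset.mem_inter.mp this).1
      have hsub : ({q, r, s} : Finset V) ⊆ e := by
        intro x hx
        simp only [Finset.mem_insert, Finset.mem_singleton] at hx
        rcases hx with rfl | rfl | rfl
        · exact hq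
        · exact hre
        · exact hse
      exact (Finset.eq_of_subset_of_card_le hsub
        (by rw [hu e he, card3_eq hqr hqs hrs])).symm
    · -- p ∉ e and q ∉ e : impossible
      exfalso
      have hsub : e ∩ A ⊆ {r} := by
        intro x hx
        rw [Finset.mem_inter, hAeq] at hx
        simp only [Finset.mem_insert, Finset.mem_singleton] at hx ⊢
        rcases hx.2 with h | h | h
        · exact absurd (h ▸ hx.1) hp
        · exact absurd (h ▸ hx.1) hq
        · exact h
      have := Finset.card_le_card hsub
      rw [Finset.card_singleton] at this
      omega
  -- now pick a vertex outside {p,q,r,s}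
  have hW : (Finset.univ \ ({p, q, r, s} : Finset V)).Nonempty := by
    rw [← Finset.card_pos]
    have h1 := Finset.card_sdiff_of_subset (Finset.subset_univ ({p, q, r, s} : Finset V))
    rw [Finset.card_univ] at h1
    have h2 := card_le4 p q r s
    omega
  obtain ⟨w, hwW⟩ := hW
  simp only [Finset.mem_sdiff, Finset.mem_univ, true_and, Finset.mem_insert,
    Finset.mem_singleton, not_or] at hwW
  obtain ⟨hwp, hwq, hwr, hws⟩ := hwW
  have hsub : H.filter (fun e => w ∈ e) ⊆ {({p, q, w} : Finset V)} := by
    intro e he'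
    rw [Finset.mem_filter] at he'
    obtain ⟨he, hwe⟩ := he'
    rcases key e he with ⟨hp, hq⟩ | rfl | rfl
    · have hsub2 : ({p, q, w} : Finset V) ⊆ e := by
        intro x hx
        simp only [Finset.mem_insert, Finset.mem_singleton] at hx
        rcases hx with rfl | rfl | rfl
        · exact hp
        · exact hq
        · exact hwe
      rw [Finset.mem_singleton]
      exact (Finset.eq_of_subset_of_card_le hsub2
        (by rw [hu e he, card3_eq hpq (fun h => hwp h.symm) (fun h => hwq h.symm)])).symm
    · simp only [Finset.mem_insert, Finset.mem_singleton] at hwe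
      rcases hwe with h | h | h
      · exact absurd h hwp
      · exact absurd h hwr
      · exact absurd h hws
    · simp only [Finset.mem_insert, Finset.mem_singleton] at hwe
      rcases hwe with h | h | h
      · exact absurd h hwq
      · exact absurd h hwr
      · exact absurd h hws
  have h1 := (hdeg5 w).trans (Finset.card_le_card hsub)
  rw [Finset.card_singleton] at h1
  omega

end Main

end EkrStarAux

/-- For `n ≥ 7`, an intersecting 3-uniform hypergraph on `n` vertices with
`(n-1).choose 2` edges is a full star: some vertex lies in all edges. -/
theorem ekr_extremal_is_star {V : Type*} [Fintype V] [DecidableEq V] (n : ℕ)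
    (hn : 7 ≤ n) (hcard : Fintype.card V = n) (H : Finset (Finset V))
    (huniform : ∀ e ∈ H, e.card = 3)
    (hint : ∀ e ∈ H, ∀ f ∈ H, (e ∩ f).Nonempty)
    (hsize : H.card = (n - 1).choose 2) :
    ∃ x : V, ∀ e ∈ H, x ∈ e := by
  classical
  by_contra hstar
  push_neg at hstar
  have hdeg : ∀ v : V, n - 2 ≤ (H.filter (fun e => v ∈ e)).card := fun v =>
    EkrStarAux.mindeg n hn hcard H huniform hint hsize v
  have hdeg5 : ∀ v : V, 5 ≤ (H.filter (fun e => v ∈ e)).card := fun v =>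
    le_trans (by omega) (hdeg v)
  have hcard7 : 7 ≤ Fintype.card V := by omega
  have h2H : 1 < H.card := by
    have h15 : (6 : ℕ).choose 2 ≤ (n - 1).choose 2 := Nat.choose_le_choose 2 (by omega)
    have h6 : (6 : ℕ).choose 2 = 15 := by decide
    omega
  by_cases hex : ∃ A ∈ H, ∃ B ∈ H, (A ∩ B).card = 1
  · obtain ⟨A, hA, B, hB, hAB1⟩ := hex
    obtain ⟨z, hz⟩ := Finset.card_eq_one.mp hAB1
    have hzAB : z ∈ A ∩ B := hz ▸ Finset.mem_singleton_self z
    rw [Finset.mem_inter] at hzAB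
    obtain ⟨a, a', haa', hza, hza', hAeq⟩ := EkrStarAux.shape3 (huniform A hA) hzAB.1
    obtain ⟨b, b', hbb', hzb, hzb', hBeq⟩ := EkrStarAux.shape3 (huniform B hB) hzAB.2
    have honeA : ∀ x, x ∈ A → x ∈ B → x = z := by
      intro x hxA hxB
      have hx : x ∈ A ∩ B := Finset.mem_inter.mpr ⟨hxA, hxB⟩
      rw [hz] at hx
      exact Finset.mem_singleton.mp hx
    have haA : a ∈ A := by rw [hAeq]; simp
    have ha'A : a' ∈ A := by rw [hAeq]; simp
    have hbB : b ∈ B := by rw [hBeq]; simp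
    have hb'B : b' ∈ B := by rw [hBeq]; simp
    have hab : a ≠ b := fun h => hza (honeA a haA (h ▸ hbB)).symm
    have hab' : a ≠ b' := fun h => hza (honeA a haA (h ▸ hb'B)).symm
    have ha'b : a' ≠ b := fun h => hza' (honeA a' ha'A (h ▸ hbB)).symm
    have ha'b' : a' ≠ b' := fun h => hza' (honeA a' ha'A (h ▸ hb'B)).symm
    obtain ⟨C, hC, hzC⟩ := hstar z
    obtain ⟨x, hxC, hxA⟩ := EkrStarAux.pick (hint C hC A hA)
    obtain ⟨y, hyC, hyB⟩ := EkrStarAux.pick (hint C hC B hB)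
    have hxz : x ≠ z := fun h => hzC (h ▸ hxC)
    have hyz : y ≠ z := fun h => hzC (h ▸ hyC)
    have hxor : x = a ∨ x = a' := by
      rw [hAeq] at hxA
      simp only [Finset.mem_insert, Finset.mem_singleton] at hxA
      rcases hxA with h | h | h
      · exact absurd h hxz
      · exact Or.inl h
      · exact Or.inr h
    have hyor : y = b ∨ y = b' := by
      rw [hBeq] at hyB
      simp only [Finset.mem_insert, Finset.mem_singleton] at hyB
      rcases hyB with h | h | h
      · exact absurd h hyz
      · exact Or.inl h
      · exact Or.inr h
    have hxy : x ≠ y := by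
      rcases hxor with rfl | rfl <;> rcases hyor with rfl | rfl <;> assumption
    obtain ⟨c, hxc, hyc, hCeq⟩ := EkrStarAux.shape3' (huniform C hC) hxC hyC hxy
    have hcC : c ∈ C := by rw [hCeq]; simp
    have hcz : c ≠ z := fun h => hzC (h ▸ hcC)
    have hA' : ({z, a, a'} : Finset V) ∈ H := hAeq ▸ hA
    have hB' : ({z, b, b'} : Finset V) ∈ H := hBeq ▸ hB
    have hC' : ({x, y, c} : Finset V) ∈ H := hCeq ▸ hC
    rcases hxor with h | h <;> rcases hyor with h' | h' <;> obtain rfl := h.symm <;>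
      obtain rfl := h'.symm
    · exact EkrStarAux.case2_main huniform hint hdeg5 hcard7 z a a' b b' c
        hza hza' hzb hzb' haa' hab hab' ha'b ha'b' hbb' hcz hxc.symm hyc.symm hA' hB' hC'
    · exact EkrStarAux.case2_main huniform hint hdeg5 hcard7 z a a' b' b c
        hza hza' hzb' hzb haa' hab' hab ha'b' ha'b hbb'.symm hcz hxc.symm hyc.symm hA'
        ((EkrStarAux.tri_perm z b b') ▸ hB') hC'
    · exact EkrStarAux.case2_main huniform hint hdeg5 hcard7 z a' a b b' c
        hza' hza hzb hzb' haa'.symm ha'b ha'b' hab hab' hbb' hcz hxc.symm hyc.symm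
        ((EkrStarAux.tri_perm z a a') ▸ hA') hB' hC'
    · exact EkrStarAux.case2_main huniform hint hdeg5 hcard7 z a' a b' b c
        hza' hza hzb' hzb haa'.symm ha'b' ha'b hab' hab hbb'.symm hcz hxc.symm hyc.symm
        ((EkrStarAux.tri_perm z a a') ▸ hA') ((EkrStarAux.tri_perm z b b') ▸ hB') hC'
  · push_neg at hex
    exact EkrStarAux.case1_main huniform hint hdeg5 hcard7 h2H hex
end

section
/- Let H be a maximal intersecting k-uniform hypergraph on n ≥ 2k vertices, and let U ⊆ V(H) be a heart of H with |U| ≥ 2k. Then the induced subhypergraph H[U] = {e ∈ H : e ⊆ U} is itself a maximal intersecting k-uniform hypergraph on U. -/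
/-- If `H` is a maximal intersecting `k`-uniform hypergraph on `n ≥ 2k`
vertices and `U` is a heart of `H` with `|U| ≥ 2k`, then the induced
subhypergraph `H[U]` is a maximal intersecting `k`-uniform hypergraph on `U`. -/
theorem heart_induces_maximal {V : Type*} [Fintype V] [DecidableEq V] (k n : ℕ)
    (hk : 2 ≤ k) (hn : 2 * k ≤ n) (hcard : Fintype.card V = n)
    (H : Finset (Finset V))
    (huniform : ∀ e ∈ H, e.card = k)
    (hint : ∀ e ∈ H, ∀ f ∈ H, (e ∩ f).Nonempty)
    (hmax : ∀ e : Finset V, e.card = k → e ∉ H → ∃ f ∈ H, e ∩ f = ∅)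
    (U : Finset V) (hU : 2 * k ≤ U.card)
    (hheart : ∀ e ∈ H, ∀ f ∈ H, (e ∩ f ∩ U).Nonempty) :
    (∀ e ∈ H.filter (· ⊆ U), ∀ f ∈ H.filter (· ⊆ U), (e ∩ f).Nonempty) ∧
    (∀ e : Finset V, e ⊆ U → e.card = k → e ∉ H.filter (· ⊆ U) →
      ∃ f ∈ H.filter (· ⊆ U), e ∩ f = ∅) := by
  constructor
  · intro e he f hf
    simp only [Finset.mem_filter] at he hf
    exact hint e he.1 f hf.1
  · intro e heU hek henot
    have heH : e ∉ H := by
      intro h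
      exact henot (Finset.mem_filter.mpr ⟨h, heU⟩)
    obtain ⟨f, hfH, hef⟩ := hmax e hek heH
    -- f ∩ U ⊆ U \ e
    have hsub : f ∩ U ⊆ U \ e := by
      intro x hx
      simp only [Finset.mem_inter] at hx
      simp only [Finset.mem_sdiff]
      refine ⟨hx.2, fun hxe => ?_⟩
      have : x ∈ e ∩ f := Finset.mem_inter.mpr ⟨hxe, hx.1⟩
      rw [hef] at this
      exact absurd this (Finset.notMem_empty x)
    have hcard1 : (f ∩ U).card ≤ k := by
      calc (f ∩ U).card ≤ f.card := Finset.card_le_card Finset.inter_subset_left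
        _ = k := huniform f hfH
    have hcard2 : k ≤ (U \ e).card := by
      rw [Finset.card_sdiff_of_subset heU, hek]
      omega
    obtain ⟨g, hg1, hg2, hg3⟩ := Finset.exists_subsuperset_card_eq hsub hcard1 hcard2
    have hgU : g ⊆ U := hg2.trans (Finset.sdiff_subset)
    have hgH : g ∈ H := by
      by_contra hg
      obtain ⟨h, hhH, hgh⟩ := hmax g hg3 hg
      obtain ⟨x, hx⟩ := hheart f hfH h hhH
      simp only [Finset.mem_inter] at hx
      have : x ∈ g ∩ h := Finset.mem_inter.mpr ⟨hg1 (Finset.mem_inter.mpr ⟨hx.1.1, hx.2⟩), hx.1.2⟩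
      rw [hgh] at this
      exact absurd this (Finset.notMem_empty x)
    refine ⟨g, Finset.mem_filter.mpr ⟨hgH, hgU⟩, ?_⟩
    rw [Finset.eq_empty_iff_forall_notMem]
    intro x hx
    simp only [Finset.mem_inter] at hx
    have := hg2 hx.2
    simp only [Finset.mem_sdiff] at this
    exact this.2 hx.1
end

section
/- For n ≥ 6, if H is a 3-uniform hypergraph on n vertices containing no two disjoint edges and no triangle C_3, and H is not contained in a star, then H is contained in K_5 plus isolated vertices, or H is contained in H_0(n). -/
/-- A 3-graph `H` contains a copy of the triangle `C₃` if there are six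
distinct vertices carrying the three triangle edges. -/
def HasTriangle {V : Type*} [DecidableEq V] (H : Finset (Finset V)) : Prop :=
  ∃ x₁ x₂ x₃ y₁ y₂ y₃ : V, ([x₁, x₂, x₃, y₁, y₂, y₃] : List V).Nodup ∧
    ({x₁, y₃, x₂} : Finset V) ∈ H ∧ ({x₁, y₂, x₃} : Finset V) ∈ H ∧
    ({x₂, y₁, x₃} : Finset V) ∈ H

lemma memPerm {α : Type*} [DecidableEq α] {H : Finset (Finset α)} {s t : Finset α}
    (h : s ∈ H) (heq : t = s) : t ∈ H := heq ▸ h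

lemma nodup6 {V : Type*} {a b c d e f : V}
    (h1 : a≠b) (h2 : a≠c) (h3 : a≠d) (h4 : a≠e) (h5 : a≠f)
    (h6 : b≠c) (h7 : b≠d) (h8 : b≠e) (h9 : b≠f)
    (h10 : c≠d) (h11 : c≠e) (h12 : c≠f)
    (h13 : d≠e) (h14 : d≠f) (h15 : e≠f) : ([a,b,c,d,e,f] : List V).Nodup := by
  simp [List.nodup_cons]; tauto

lemma nodup4 {V : Type*} {a b c d : V}
    (h1 : a≠b) (h2 : a≠c) (h3 : a≠d) (h6 : b≠c) (h7 : b≠d) (h10 : c≠d) :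
    ([a,b,c,d] : List V).Nodup := by
  simp [List.nodup_cons]; tauto

lemma eq_three {V : Type*} [DecidableEq V] {e : Finset V} {a b c : V} (hc : e.card = 3)
    (ha : a ∈ e) (hb : b ∈ e) (hcc : c ∈ e) (hab : a ≠ b) (hac : a ≠ c) (hbc : b ≠ c) :
    e = {a, b, c} := by
  refine (Finset.eq_of_subset_of_card_le ?_ ?_).symm
  · intro x hx; simp at hx; rcases hx with rfl | rfl | rfl <;> assumption
  · rw [hc]; simp [hab, hac, hbc]

lemma third_elem {V : Type*} [DecidableEq V] {e : Finset V} {a b : V} (hc : e.card = 3)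
    (ha : a ∈ e) (hb : b ∈ e) (hab : a ≠ b) :
    ∃ c, c ≠ a ∧ c ≠ b ∧ e = {a, b, c} := by
  have hns : ¬ e ⊆ {a, b} := by
    intro hsub
    have h1 := Finset.card_le_card hsub
    have h2 : ({a, b} : Finset V).card ≤ 2 := (Finset.card_insert_le _ _).trans (by simp)
    omega
  obtain ⟨c, hce, hcn⟩ := Finset.not_subset.mp hns
  simp at hcn
  exact ⟨c, hcn.1, hcn.2, eq_three hc ha hb hce hab (Ne.symm hcn.1) (Ne.symm hcn.2)⟩

/-- Any edge avoiding `a` is inside `{b,c,d,p}`, given edges `{a,b,c}` and `{a,d,p}`. -/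
lemma avoid_subset {V : Type*} [DecidableEq V] {H : Finset (Finset V)}
    (huniform : ∀ e ∈ H, e.card = 3)
    (hint : ∀ e ∈ H, ∀ f ∈ H, (e ∩ f).Nonempty)
    (htrifree : ¬ HasTriangle H)
    {a b c d p : V}
    (hab : a ≠ b) (hac : a ≠ c) (had : a ≠ d) (hap : a ≠ p)
    (hbc : b ≠ c) (hbd : b ≠ d) (hbp : b ≠ p) (hcd : c ≠ d) (hcp : c ≠ p) (hdp : d ≠ p)
    (he : ({a, b, c} : Finset V) ∈ H) (hf : ({a, d, p} : Finset V) ∈ H)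
    {g : Finset V} (hg : g ∈ H) (hag : a ∉ g) : g ⊆ {b, c, d, p} := by
  intro w hw
  by_contra hwn
  simp only [Finset.mem_insert, Finset.mem_singleton] at hwn
  push_neg at hwn
  obtain ⟨hwb, hwc, hwd, hwp⟩ := hwn
  have hwa : w ≠ a := fun h => hag (h ▸ hw)
  have hbcg : b ∈ g ∨ c ∈ g := by
    obtain ⟨x, hx⟩ := hint g hg _ he
    rw [Finset.mem_inter] at hx
    have h2 := hx.2; simp at h2
    rcases h2 with rfl | rfl | rfl
    · exact absurd hx.1 hag
    · exact Or.inl hx.1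
    · exact Or.inr hx.1
  have hdpg : d ∈ g ∨ p ∈ g := by
    obtain ⟨x, hx⟩ := hint g hg _ hf
    rw [Finset.mem_inter] at hx
    have h2 := hx.2; simp at h2
    rcases h2 with rfl | rfl | rfl
    · exact absurd hx.1 hag
    · exact Or.inl hx.1
    · exact Or.inr hx.1
  have hgc := huniform g hg
  rcases hbcg with hβ | hβ <;> rcases hdpg with hδ | hδ
  · have hgeq : g = {b, w, d} := eq_three hgc hβ hw hδ (Ne.symm hwb) hbd hwd
    exact htrifree ⟨a, b, d, w, p, c,
      nodup6 hab had hwa.symm hap hac hbd hwb.symm hbp hbc hwd.symm hdp hcd.symm hwp hwc hcp.symm,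
      memPerm he (by ext x; simp; tauto), memPerm hf (by ext x; simp; tauto), hgeq ▸ hg⟩
  · have hgeq : g = {b, w, p} := eq_three hgc hβ hw hδ (Ne.symm hwb) hbp hwp
    exact htrifree ⟨a, b, p, w, d, c,
      nodup6 hab hap hwa.symm had hac hbp hwb.symm hbd hbc hwp.symm hdp.symm hcp.symm hwd hwc hcd.symm,
      memPerm he (by ext x; simp; tauto), hf, hgeq ▸ hg⟩
  · have hgeq : g = {c, w, d} := eq_three hgc hβ hw hδ (Ne.symm hwc) hcd hwd
    exact htrifree ⟨a, c, d, w, p, b,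
      nodup6 hac had hwa.symm hap hab hcd hwc.symm hcp hbc.symm hwd.symm hdp hbd.symm hwp hwb hbp.symm,
      he, memPerm hf (by ext x; simp; tauto), hgeq ▸ hg⟩
  · have hgeq : g = {c, w, p} := eq_three hgc hβ hw hδ (Ne.symm hwc) hcp hwp
    exact htrifree ⟨a, c, p, w, d, b,
      nodup6 hac hap hwa.symm had hab hcp hwc.symm hcd hbc.symm hwp.symm hdp.symm hbp.symm hwd hwb hbd.symm,
      he, hf, hgeq ▸ hg⟩

set_option maxHeartbeats 1600000 in
lemma keyLemma {V : Type*} [DecidableEq V] {H : Finset (Finset V)}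
    (huniform : ∀ e ∈ H, e.card = 3)
    (hint : ∀ e ∈ H, ∀ f ∈ H, (e ∩ f).Nonempty)
    (htrifree : ¬ HasTriangle H)
    (hnostar : ¬ ∃ x : V, ∀ e ∈ H, x ∈ e)
    {a b c d p u : V}
    (hab : a ≠ b) (hac : a ≠ c) (had : a ≠ d) (hap : a ≠ p)
    (hbc : b ≠ c) (hbd : b ≠ d) (hbp : b ≠ p) (hcd : c ≠ d) (hcp : c ≠ p) (hdp : d ≠ p)
    (hu : u ∉ ({a, b, c, d, p} : Finset V))
    (he : ({a, b, c} : Finset V) ∈ H) (hf : ({a, d, p} : Finset V) ∈ H)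
    (hh : ({a, b, u} : Finset V) ∈ H) :
    ∃ x y z v : V, ([x, y, z, v] : List V).Nodup ∧
      ∀ e ∈ H, ({x, y} : Finset V) ⊆ e ∨ e = {x, z, v} ∨ e = {y, z, v} := by
  simp only [Finset.mem_insert, Finset.mem_singleton] at hu
  push_neg at hu
  obtain ⟨hua, hub, huc, hud, hup⟩ := hu
  have step1 : ∀ g ∈ H, a ∉ g → g = ({b, d, p} : Finset V) := by
    intro g hg hag
    have hsub := avoid_subset huniform hint htrifree hab hac had hap hbc hbd hbp hcd hcp hdp
      he hf hg hag
    have hbg : b ∈ g := by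
      obtain ⟨x, hx⟩ := hint g hg _ hh
      rw [Finset.mem_inter] at hx
      have h2 := hx.2; simp at h2
      rcases h2 with rfl | rfl | rfl
      · exact absurd hx.1 hag
      · exact hx.1
      · have := hsub hx.1; simp at this; tauto
    have hdpg : d ∈ g ∨ p ∈ g := by
      obtain ⟨x, hx⟩ := hint g hg _ hf
      rw [Finset.mem_inter] at hx
      have h2 := hx.2; simp at h2
      rcases h2 with rfl | rfl | rfl
      · exact absurd hx.1 hag
      · exact Or.inl hx.1
      · exact Or.inr hx.1
    by_cases hcg : c ∈ g
    · rcases hdpg with hdg | hpg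
      · have hgeq : g = {b, c, d} := eq_three (huniform g hg) hbg hcg hdg hbc hbd hcd
        exact absurd (⟨a, b, d, c, p, u,
          nodup6 hab had hac hap hua.symm hbd hbc hbp hub.symm hcd.symm hdp hud.symm hcp huc.symm hup.symm,
          memPerm hh (by ext x; simp; tauto), memPerm hf (by ext x; simp; tauto),
          hgeq ▸ hg⟩ : HasTriangle H) htrifree
      · have hgeq : g = {b, c, p} := eq_three (huniform g hg) hbg hcg hpg hbc hbp hcp
        exact absurd (⟨a, b, p, c, d, u,
          nodup6 hab hap hac had hua.symm hbp hbc hbd hub.symm hcp.symm hdp.symm hup.symm hcd huc.symm hud.symm,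
          memPerm hh (by ext x; simp; tauto), hf, hgeq ▸ hg⟩ : HasTriangle H) htrifree
    · have hsub3 : g ⊆ {b, d, p} := by
        intro x hx
        have := hsub hx
        simp at this ⊢
        rcases this with rfl | rfl | rfl | rfl
        · tauto
        · exact absurd hx hcg
        · tauto
        · tauto
      exact Finset.eq_of_subset_of_card_le hsub3
        (by rw [huniform g hg]; exact le_of_eq (by simp [hbd, hbp, hdp]))
  obtain ⟨g₀, hg₀H, hag₀⟩ : ∃ g ∈ H, a ∉ g := by
    by_contra hx; push_neg at hx; exact hnostar ⟨a, hx⟩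
  have hg₀ : ({b, d, p} : Finset V) ∈ H := step1 g₀ hg₀H hag₀ ▸ hg₀H
  have step2 : ∀ k ∈ H, a ∈ k → b ∉ k → k = ({a, d, p} : Finset V) := by
    intro k hk hak hbk
    have hdpk : d ∈ k ∨ p ∈ k := by
      obtain ⟨x, hx⟩ := hint k hk _ hg₀
      rw [Finset.mem_inter] at hx
      have h2 := hx.2; simp at h2
      rcases h2 with rfl | rfl | rfl
      · exact absurd hx.1 hbk
      · exact Or.inl hx.1
      · exact Or.inr hx.1
    by_cases hdk : d ∈ k
    · by_cases hpk : p ∈ k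
      · exact eq_three (huniform k hk) hak hdk hpk had hap hdp
      · obtain ⟨q, hqa, hqd, hkeq⟩ := third_elem (huniform k hk) hak hdk had
        have hqb : q ≠ b := fun h => hbk (h ▸ (by rw [hkeq]; simp))
        have hqp : q ≠ p := fun h => hpk (h ▸ (by rw [hkeq]; simp))
        by_cases hqc : q = c
        · subst hqc
          exact absurd (⟨a, b, d, p, q, u,
            nodup6 hab had hap hqa.symm hua.symm hbd hbp hqb.symm hub.symm hdp hqd.symm hud.symm hqp.symm hup.symm (fun h => huc (h.symm)),
            memPerm hh (by ext x; simp; tauto), memPerm hk (by rw [hkeq]; ext x; simp; tauto),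
            memPerm hg₀ (by ext x; simp; tauto)⟩ : HasTriangle H) htrifree
        · exact absurd (⟨a, b, d, p, q, c,
            nodup6 hab had hap hqa.symm hac hbd hbp hqb.symm hbc hdp hqd.symm hcd.symm hqp.symm hcp.symm hqc,
            memPerm he (by ext x; simp; tauto), memPerm hk (by rw [hkeq]; ext x; simp; tauto),
            memPerm hg₀ (by ext x; simp; tauto)⟩ : HasTriangle H) htrifree
    · have hpk : p ∈ k := hdpk.resolve_left hdk
      obtain ⟨q, hqa, hqp, hkeq⟩ := third_elem (huniform k hk) hak hpk hap
      have hqb : q ≠ b := fun h => hbk (h ▸ (by rw [hkeq]; simp))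
      have hqd : q ≠ d := fun h => hdk (h ▸ (by rw [hkeq]; simp))
      by_cases hqc : q = c
      · subst hqc
        exact absurd (⟨a, b, p, d, q, u,
          nodup6 hab hap had hqa.symm hua.symm hbp hbd hqb.symm hub.symm hdp.symm hqp.symm hup.symm hqd.symm hud.symm (fun h => huc (h.symm)),
          memPerm hh (by ext x; simp; tauto), memPerm hk (by rw [hkeq]; ext x; simp; tauto),
          hg₀⟩ : HasTriangle H) htrifree
      · exact absurd (⟨a, b, p, d, q, c,
          nodup6 hab hap had hqa.symm hac hbp hbd hqb.symm hbc hdp.symm hqp.symm hcp.symm hqd.symm hcd.symm hqc,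
          memPerm he (by ext x; simp; tauto), memPerm hk (by rw [hkeq]; ext x; simp; tauto),
          hg₀⟩ : HasTriangle H) htrifree
  refine ⟨a, b, d, p, nodup4 hab had hap hbd hbp hdp, ?_⟩
  intro k hk
  by_cases hak : a ∈ k
  · by_cases hbk : b ∈ k
    · left; intro x hx; simp at hx; rcases hx with rfl | rfl <;> assumption
    · exact Or.inr (Or.inl (step2 k hk hak hbk))
  · exact Or.inr (Or.inr (step1 k hk hak))

set_option maxHeartbeats 1600000 in
/-- For `n ≥ 6`, an intersecting, triangle-free 3-uniform hypergraph on `n`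
vertices which is not contained in a star is contained in `K₅` plus isolated
vertices, or in `H₀(n)`. -/
theorem triangle_free_structure {V : Type*} [Fintype V] [DecidableEq V] (n : ℕ)
    (hn : 6 ≤ n) (hcard : Fintype.card V = n) (H : Finset (Finset V))
    (huniform : ∀ e ∈ H, e.card = 3)
    (hint : ∀ e ∈ H, ∀ f ∈ H, (e ∩ f).Nonempty)
    (htrifree : ¬ HasTriangle H)
    (hnostar : ¬ ∃ x : V, ∀ e ∈ H, x ∈ e) :
    (∃ S : Finset V, S.card = 5 ∧ ∀ e ∈ H, e ⊆ S) ∨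
    (∃ x y z v : V, ([x, y, z, v] : List V).Nodup ∧
      ∀ e ∈ H, ({x, y} : Finset V) ⊆ e ∨ e = {x, z, v} ∨ e = {y, z, v}) := by
  have hV5 : 5 ≤ (Finset.univ : Finset V).card := by rw [Finset.card_univ, hcard]; omega
  by_cases hA : ∀ e ∈ H, ∀ f ∈ H, 2 ≤ (e ∩ f).card
  · left
    by_cases hex : ∃ e ∈ H, ∃ f ∈ H, e ≠ f
    · obtain ⟨e, he, f, hf, hef⟩ := hex
      have hcef : (e ∩ f).card = 2 := by
        have h1 := hA e he f hf
        have h2 : e ∩ f ⊆ e := Finset.inter_subset_left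
        have h3 : (e ∩ f).card ≤ 3 := (Finset.card_le_card h2).trans_eq (huniform e he)
        by_contra hne
        have h4 : (e ∩ f).card = 3 := by omega
        have h5 : e ∩ f = e := Finset.eq_of_subset_of_card_le h2 (by rw [huniform e he, h4])
        have h6 : e ⊆ f := by rw [← h5]; exact Finset.inter_subset_right
        exact hef (Finset.eq_of_subset_of_card_le h6
          (by rw [huniform e he, huniform f hf]))
      obtain ⟨a, b, hab, habeq⟩ := Finset.card_eq_two.mp hcef
      have hae : a ∈ e := (Finset.mem_inter.mp (by rw [habeq]; simp)).1
      have haf : a ∈ f := (Finset.mem_inter.mp (by rw [habeq]; simp)).2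
      have hbe : b ∈ e := (Finset.mem_inter.mp (by rw [habeq]; simp : b ∈ e ∩ f)).1
      have hbf : b ∈ f := (Finset.mem_inter.mp (by rw [habeq]; simp : b ∈ e ∩ f)).2
      obtain ⟨c, hca, hcb, heq⟩ := third_elem (huniform e he) hae hbe hab
      obtain ⟨d, hda, hdb, hfeq⟩ := third_elem (huniform f hf) haf hbf hab
      have hcf : c ∉ f := by
        intro hcf
        have : c ∈ e ∩ f := Finset.mem_inter.mpr ⟨by rw [heq]; simp, hcf⟩
        rw [habeq] at this; simp at this; tauto
      have hcd : c ≠ d := fun h => hcf (by rw [hfeq, h]; simp)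
      have key : ∀ g ∈ H, (a ∉ g ∨ b ∉ g) → g = {b, c, d} ∨ g = {a, c, d} := by
        intro g hgH hgab
        have hge := hA g hgH e he
        have hgf := hA g hgH f hf
        by_cases hag : a ∈ g
        · have hbg : b ∉ g := by rcases hgab with h | h; exact absurd hag h; exact h
          have hcg : c ∈ g := by
            by_contra hcg
            have hsub : g ∩ e ⊆ {a} := by
              intro x hx
              rw [Finset.mem_inter, heq] at hx
              obtain ⟨hx1, hx2⟩ := hx
              simp at hx2 ⊢
              rcases hx2 with rfl | rfl | rfl
              · rfl
              · exact absurd hx1 hbg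
              · exact absurd hx1 hcg
            have := Finset.card_le_card hsub
            simp at this; omega
          have hdg : d ∈ g := by
            by_contra hdg
            have hsub : g ∩ f ⊆ {a} := by
              intro x hx
              rw [Finset.mem_inter, hfeq] at hx
              obtain ⟨hx1, hx2⟩ := hx
              simp at hx2 ⊢
              rcases hx2 with rfl | rfl | rfl
              · rfl
              · exact absurd hx1 hbg
              · exact absurd hx1 hdg
            have := Finset.card_le_card hsub
            simp at this; omega
          exact Or.inr (eq_three (huniform g hgH) hag hcg hdg (Ne.symm hca) (Ne.symm hda) hcd)
        · have hsube : g ∩ e ⊆ {b, c} := by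
            intro x hx
            rw [Finset.mem_inter, heq] at hx
            obtain ⟨hx1, hx2⟩ := hx
            simp at hx2 ⊢
            rcases hx2 with rfl | rfl | rfl
            · exact absurd hx1 hag
            · tauto
            · tauto
          have hbcg : g ∩ e = {b, c} := Finset.eq_of_subset_of_card_le hsube
            (le_trans (le_of_eq (by simp [Ne.symm hcb])) hge)
          have hsubf : g ∩ f ⊆ {b, d} := by
            intro x hx
            rw [Finset.mem_inter, hfeq] at hx
            obtain ⟨hx1, hx2⟩ := hx
            simp at hx2 ⊢
            rcases hx2 with rfl | rfl | rfl
            · exact absurd hx1 hag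
            · tauto
            · tauto
          have hbdg : g ∩ f = {b, d} := Finset.eq_of_subset_of_card_le hsubf
            (le_trans (le_of_eq (by simp [Ne.symm hdb])) hgf)
          have hbg : b ∈ g := (Finset.mem_inter.mp (by rw [hbcg]; simp : b ∈ g ∩ e)).1
          have hcg : c ∈ g := (Finset.mem_inter.mp (by rw [hbcg]; simp : c ∈ g ∩ e)).1
          have hdg : d ∈ g := (Finset.mem_inter.mp (by rw [hbdg]; simp : d ∈ g ∩ f)).1
          exact Or.inl (eq_three (huniform g hgH) hbg hcg hdg (Ne.symm hcb) (Ne.symm hdb) hcd)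
      by_cases hstar : ∀ g ∈ H, a ∈ g ∧ b ∈ g
      · exact absurd ⟨a, fun k hk => (hstar k hk).1⟩ hnostar
      · push_neg at hstar
        obtain ⟨g₀, hg₀H, hg₀ab⟩ := hstar
        have hg0 := key g₀ hg₀H (by tauto)
        have hall : ∀ k ∈ H, k ⊆ {a, b, c, d} := by
          intro k hk
          by_cases hk1 : a ∈ k ∧ b ∈ k
          · obtain ⟨w, hwa, hwb, hkeq⟩ := third_elem (huniform k hk) hk1.1 hk1.2 hab
            have hw : w = c ∨ w = d := by
              have h2 := hA k hk g₀ hg₀H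
              by_contra hwn
              push_neg at hwn
              obtain ⟨hwc, hwd⟩ := hwn
              rcases hg0 with hg0 | hg0
              · have hsub : k ∩ g₀ ⊆ {b} := by
                  intro x hx
                  rw [Finset.mem_inter, hkeq, hg0] at hx
                  obtain ⟨hx1, hx2⟩ := hx
                  simp at hx1 hx2 ⊢
                  rcases hx1 with rfl | rfl | rfl
                  · rcases hx2 with rfl | rfl | rfl <;> tauto
                  · rfl
                  · rcases hx2 with rfl | rfl | rfl <;> tauto
                have := Finset.card_le_card hsub
                simp at this; omega
              · have hsub : k ∩ g₀ ⊆ {a} := by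
                  intro x hx
                  rw [Finset.mem_inter, hkeq, hg0] at hx
                  obtain ⟨hx1, hx2⟩ := hx
                  simp at hx1 hx2 ⊢
                  rcases hx1 with rfl | rfl | rfl
                  · rfl
                  · rcases hx2 with rfl | rfl | rfl <;> tauto
                  · rcases hx2 with rfl | rfl | rfl <;> tauto
                have := Finset.card_le_card hsub
                simp at this; omega
            rw [hkeq]
            intro x hx
            simp at hx ⊢
            rcases hx with rfl | rfl | rfl <;> tauto
          · have hk2 := key k hk (by tauto)
            rcases hk2 with hk2 | hk2 <;> rw [hk2] <;> intro x hx <;> simp at hx ⊢ <;>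
              rcases hx with rfl | rfl | rfl <;> tauto
        have hc4 : ({a, b, c, d} : Finset V).card ≤ 5 := by
          refine le_trans (Finset.card_insert_le _ _) ?_
          refine Nat.succ_le_succ (le_trans (Finset.card_insert_le _ _) ?_)
          refine Nat.succ_le_succ (le_trans (Finset.card_insert_le _ _) ?_)
          simp
        obtain ⟨S, hS1, _, hS3⟩ := Finset.exists_subsuperset_card_eq
          (Finset.subset_univ ({a, b, c, d} : Finset V)) hc4 hV5
        exact ⟨S, hS3, fun k hk => (hall k hk).trans hS1⟩
    · push_neg at hex
      by_cases hne : H.Nonempty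
      · obtain ⟨e₀, he₀⟩ := hne
        have hc3 : e₀.card ≤ 5 := by rw [huniform e₀ he₀]; omega
        obtain ⟨S, hS1, _, hS3⟩ := Finset.exists_subsuperset_card_eq
          (Finset.subset_univ e₀) hc3 hV5
        exact ⟨S, hS3, fun k hk => (hex k hk e₀ he₀) ▸ hS1⟩
      · obtain ⟨S, _, hS3⟩ := Finset.exists_subsuperset_card_eq
          (Finset.subset_univ (∅ : Finset V)) (by simp) hV5
        exact ⟨S, hS3.2, fun k hk => absurd ⟨k, hk⟩ hne⟩
  · push_neg at hA
    obtain ⟨e, he, f, hf, hef2⟩ := hA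
    have hone : (e ∩ f).card = 1 :=
      le_antisymm (by omega) (Finset.card_pos.mpr (hint e he f hf))
    obtain ⟨a, ha⟩ := Finset.card_eq_one.mp hone
    have hae : a ∈ e := (Finset.mem_inter.mp (by rw [ha]; simp : a ∈ e ∩ f)).1
    have haf : a ∈ f := (Finset.mem_inter.mp (by rw [ha]; simp : a ∈ e ∩ f)).2
    have hbex : ∃ b ∈ e, b ≠ a := by
      by_contra hx
      push_neg at hx
      have hsub : e ⊆ {a} := fun x hxe => by simp [hx x hxe]
      have := Finset.card_le_card hsub
      rw [huniform e he] at this; simp at this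
    obtain ⟨b, hbe, hba⟩ := hbex
    obtain ⟨c, hca, hcb, heq⟩ := third_elem (huniform e he) hae hbe (Ne.symm hba)
    have hdex : ∃ d ∈ f, d ≠ a := by
      by_contra hx
      push_neg at hx
      have hsub : f ⊆ {a} := fun x hxf => by simp [hx x hxf]
      have := Finset.card_le_card hsub
      rw [huniform f hf] at this; simp at this
    obtain ⟨d, hdf, hda⟩ := hdex
    obtain ⟨p, hpa, hpd, hfeq⟩ := third_elem (huniform f hf) haf hdf (Ne.symm hda)
    have hbf : b ∉ f := by
      intro hh
      have : b ∈ e ∩ f := Finset.mem_inter.mpr ⟨hbe, hh⟩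
      rw [ha] at this; simp at this; exact hba this
    have hcf : c ∉ f := by
      intro hh
      have : c ∈ e ∩ f := Finset.mem_inter.mpr ⟨by rw [heq]; simp, hh⟩
      rw [ha] at this; simp at this; exact hca this
    have hbd : b ≠ d := fun h => hbf (h ▸ hdf)
    have hbp : b ≠ p := fun h => hbf (by rw [hfeq, h]; simp)
    have hcd : c ≠ d := fun h => hcf (h ▸ hdf)
    have hcp : c ≠ p := fun h => hcf (by rw [hfeq, h]; simp)
    rw [heq] at he
    rw [hfeq] at hf
    have hab : a ≠ b := Ne.symm hba
    have hac : a ≠ c := Ne.symm hca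
    have had : a ≠ d := Ne.symm hda
    have hap : a ≠ p := Ne.symm hpa
    have hbc : b ≠ c := Ne.symm hcb
    have hdp : d ≠ p := Ne.symm hpd
    by_cases hB1 : ∀ g ∈ H, g ⊆ ({a, b, c, d, p} : Finset V)
    · exact Or.inl ⟨{a, b, c, d, p}, by simp [hab, hac, had, hap, hbc, hbd, hbp, hcd, hcp, hdp], hB1⟩
    · right
      push_neg at hB1
      obtain ⟨h, hhH, hhs⟩ := hB1
      obtain ⟨u, huh, hu⟩ := Finset.not_subset.mp hhs
      have hah : a ∈ h := by
        by_contra hah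
        have hsub := avoid_subset huniform hint htrifree hab hac had hap hbc hbd hbp hcd hcp hdp
          he hf hhH hah
        have := hsub huh
        simp at this hu
        tauto
      simp at hu
      push_neg at hu
      obtain ⟨hua, hub, huc, hud, hup⟩ := hu
      obtain ⟨t, hta, htu, hheq⟩ := third_elem (huniform h hhH) hah huh (Ne.symm hua)
      obtain ⟨g₀, hg₀H, hag₀⟩ : ∃ g ∈ H, a ∉ g := by
        by_contra hx; push_neg at hx; exact hnostar ⟨a, hx⟩
      have hg₀sub := avoid_subset huniform hint htrifree hab hac had hap hbc hbd hbp hcd hcp hdp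
        he hf hg₀H hag₀
      obtain ⟨w, hw⟩ := hint h hhH g₀ hg₀H
      rw [Finset.mem_inter] at hw
      obtain ⟨hw1, hw2⟩ := hw
      rw [hheq] at hw1
      simp at hw1
      have htg : t ∈ g₀ := by
        rcases hw1 with rfl | rfl | rfl
        · exact absurd hw2 hag₀
        · exact absurd (hg₀sub hw2) (by simp; push_neg; exact ⟨hub, huc, hud, hup⟩)
        · exact hw2
      have htmem := hg₀sub htg
      have hmem_h : ({a, t, u} : Finset V) ∈ H :=
        memPerm hhH (by rw [hheq]; ext x; simp; tauto)
      simp at htmem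
      rcases htmem with rfl | rfl | rfl | rfl
      · exact keyLemma huniform hint htrifree hnostar hab hac had hap hbc hbd hbp hcd hcp hdp
          (by simp; push_neg; exact ⟨hua, hub, huc, hud, hup⟩) he hf hmem_h
      · exact keyLemma huniform hint htrifree hnostar hac hab had hap (Ne.symm hbc) hcd hcp hbd hbp hdp
          (by simp; push_neg; exact ⟨hua, huc, hub, hud, hup⟩)
          (memPerm he (by ext x; simp; tauto)) hf hmem_h
      · exact keyLemma huniform hint htrifree hnostar had hap hab hac hdp (Ne.symm hbd) (Ne.symm hcd)
          (Ne.symm hbp) (Ne.symm hcp) hbc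
          (by simp; push_neg; exact ⟨hua, hud, hup, hub, huc⟩) hf he hmem_h
      · exact keyLemma huniform hint htrifree hnostar hap had hab hac (Ne.symm hdp) (Ne.symm hbp)
          (Ne.symm hcp) (Ne.symm hbd) (Ne.symm hcd) hbc
          (by simp; push_neg; exact ⟨hua, hup, hud, hub, huc⟩)
          (memPerm hf (by ext x; simp; tauto)) he hmem_h
end

section
/- For n ≥ 7, the 3-graph H_1(n) = up({x,y}) ∪ up({x,z}) ∪ up({x,v}) ∪ {{y,z,v}} on n vertices is intersecting and has exactly 3n - 8 edges. -/
lemma third_elt {V : Type*} [DecidableEq V] {e : Finset V} {a b : V} (hab : a ≠ b)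
    (ha : a ∈ e) (hb : b ∈ e) (hc : e.card = 3) :
    ∃ w, w ≠ a ∧ w ≠ b ∧ e = {a, b, w} := by
  have hsub : ({a, b} : Finset V) ⊆ e := by
    simp [Finset.insert_subset_iff, ha, hb]
  have h2 : ({a, b} : Finset V).card = 2 := by
    rw [Finset.card_insert_of_notMem (by simp [hab]), Finset.card_singleton]
  have h1 : (e \ {a, b}).card = 1 := by
    rw [Finset.card_sdiff_of_subset hsub, hc, h2]
  obtain ⟨w, hw⟩ := Finset.card_eq_one.mp h1
  have hwmem : w ∈ e \ ({a, b} : Finset V) := hw ▸ Finset.mem_singleton_self w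
  have hwe := (Finset.mem_sdiff.mp hwmem).1
  have hwab := (Finset.mem_sdiff.mp hwmem).2
  simp only [Finset.mem_insert, Finset.mem_singleton, not_or] at hwab
  refine ⟨w, hwab.1, hwab.2, ?_⟩
  have := Finset.union_sdiff_of_subset hsub
  rw [hw] at this
  rw [← this]
  ext u; simp [or_assoc]

/-- For `n ≥ 7`, the 3-graph
`H₁(n) = up({x,y}) ∪ up({x,z}) ∪ up({x,v}) ∪ {{y,z,v}}` is intersecting and
has exactly `3n - 8` edges. -/
theorem H1_intersecting_card {V : Type*} [Fintype V] [DecidableEq V] (n : ℕ)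
    (hn : 7 ≤ n) (hcard : Fintype.card V = n)
    (x y z v : V) (hnodup : ([x, y, z, v] : List V).Nodup)
    (H : Finset (Finset V))
    (hH : H = (Finset.univ.powersetCard 3).filter
        (fun e => ({x, y} : Finset V) ⊆ e ∨ ({x, z} : Finset V) ⊆ e ∨
          ({x, v} : Finset V) ⊆ e) ∪ {({y, z, v} : Finset V)}) :
    (∀ e ∈ H, ∀ f ∈ H, (e ∩ f).Nonempty) ∧ H.card = 3 * n - 8 := by
  simp only [List.nodup_cons, List.mem_cons, List.mem_singleton, List.not_mem_nil,
    List.nodup_nil, or_false, not_or, and_true] at hnodup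
  obtain ⟨⟨hxy, hxz, hxv⟩, ⟨hyz, hyv⟩, hzv, -⟩ := hnodup
  set F : Finset (Finset V) := (Finset.univ.powersetCard 3).filter
      (fun e => ({x, y} : Finset V) ⊆ e ∨ ({x, z} : Finset V) ⊆ e ∨
        ({x, v} : Finset V) ⊆ e) with hF
  -- membership in F
  have hmemF : ∀ e ∈ F, x ∈ e ∧ (y ∈ e ∨ z ∈ e ∨ v ∈ e) ∧ e.card = 3 := by
    intro e he
    rw [hF, Finset.mem_filter, Finset.mem_powersetCard_univ] at he
    obtain ⟨hc, h | h | h⟩ := he <;>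
      simp only [Finset.insert_subset_iff, Finset.singleton_subset_iff] at h
    · exact ⟨h.1, Or.inl h.2, hc⟩
    · exact ⟨h.1, Or.inr (Or.inl h.2), hc⟩
    · exact ⟨h.1, Or.inr (Or.inr h.2), hc⟩
  constructor
  · intro e he f hf
    rw [hH, Finset.mem_union, Finset.mem_singleton] at he hf
    rcases he with he | he <;> rcases hf with hf | hf
    · exact ⟨x, Finset.mem_inter.mpr ⟨(hmemF e he).1, (hmemF f hf).1⟩⟩
    · obtain ⟨-, hy | hz | hv, -⟩ := hmemF e he
      · exact ⟨y, Finset.mem_inter.mpr ⟨hy, by simp [hf]⟩⟩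
      · exact ⟨z, Finset.mem_inter.mpr ⟨hz, by simp [hf]⟩⟩
      · exact ⟨v, Finset.mem_inter.mpr ⟨hv, by simp [hf]⟩⟩
    · obtain ⟨-, hy | hz | hv, -⟩ := hmemF f hf
      · exact ⟨y, Finset.mem_inter.mpr ⟨by simp [he], hy⟩⟩
      · exact ⟨z, Finset.mem_inter.mpr ⟨by simp [he], hz⟩⟩
      · exact ⟨v, Finset.mem_inter.mpr ⟨by simp [he], hv⟩⟩
    · exact ⟨y, Finset.mem_inter.mpr ⟨by simp [he], by simp [hf]⟩⟩
  -- cardinality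
  · have hyzv_not : ({y, z, v} : Finset V) ∉ F := by
      intro h
      have := (hmemF _ h).1
      simp only [Finset.mem_insert, Finset.mem_singleton] at this
      rcases this with h | h | h
      exacts [hxy h, hxz h, hxv h]
    have hHcard : H.card = F.card + 1 := by
      rw [hH, Finset.card_union_of_disjoint (by simp [hyzv_not]),
        Finset.card_singleton]
    -- decompose F
    set A : Finset (Finset V) := (Finset.univ \ {x, y}).image (fun w => {x, y, w}) with hA
    set B : Finset (Finset V) := (Finset.univ \ {x, y, z}).image (fun w => {x, z, w}) with hB
    set C : Finset (Finset V) := (Finset.univ \ {x, y, z, v}).image (fun w => {x, v, w}) with hC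
    have cardtri : ∀ a b w : V, a ≠ b → w ≠ a → w ≠ b → ({a, b, w} : Finset V).card = 3 := by
      intro a b w h1 h2 h3
      rw [Finset.card_insert_of_notMem (by simp [h1, h2.symm]),
        Finset.card_insert_of_notMem (by simp [h3.symm]), Finset.card_singleton]
    have hFA : F = A ∪ B ∪ C := by
      ext e
      simp only [Finset.mem_union, hF, Finset.mem_filter, Finset.mem_powersetCard_univ,
        hA, hB, hC, Finset.mem_image, Finset.mem_sdiff, Finset.mem_univ, true_and,
        Finset.mem_insert, Finset.mem_singleton, not_or]
      constructor
      · rintro ⟨hc, hsub⟩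
        by_cases hxe : x ∈ e
        swap
        · exfalso
          rcases hsub with h | h | h <;>
            exact hxe (h (by simp))
        by_cases hye : y ∈ e
        · obtain ⟨w, hw1, hw2, hw3⟩ := third_elt hxy hxe hye hc
          exact Or.inl (Or.inl ⟨w, ⟨hw1, hw2⟩, hw3.symm⟩)
        by_cases hze : z ∈ e
        · obtain ⟨w, hw1, hw2, hw3⟩ := third_elt hxz hxe hze hc
          refine Or.inl (Or.inr ⟨w, ⟨hw1, ?_, hw2⟩, hw3.symm⟩)
          rintro rfl; exact hye (by rw [hw3]; simp)
        by_cases hve : v ∈ e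
        · obtain ⟨w, hw1, hw2, hw3⟩ := third_elt hxv hxe hve hc
          refine Or.inr ⟨w, ⟨hw1, ?_, ?_, hw2⟩, hw3.symm⟩
          · rintro rfl; exact hye (by rw [hw3]; simp)
          · rintro rfl; exact hze (by rw [hw3]; simp)
        · exfalso
          rcases hsub with h | h | h
          · exact hye (h (by simp))
          · exact hze (h (by simp))
          · exact hve (h (by simp))
      · rintro ((⟨w, ⟨hw1, hw2⟩, rfl⟩ | ⟨w, ⟨hw1, hw2, hw3⟩, rfl⟩) | ⟨w, ⟨hw1, hw2, hw3, hw4⟩, rfl⟩)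
        · exact ⟨cardtri _ _ _ hxy hw1 hw2, Or.inl (by simp [Finset.insert_subset_iff])⟩
        · exact ⟨cardtri _ _ _ hxz hw1 hw3, Or.inr (Or.inl (by simp [Finset.insert_subset_iff]))⟩
        · exact ⟨cardtri _ _ _ hxv hw1 hw4, Or.inr (Or.inr (by simp [Finset.insert_subset_iff]))⟩
    -- y ∈ e facts for disjointness
    have hyA : ∀ e ∈ A, y ∈ e := by
      rintro e he
      simp only [hA, Finset.mem_image] at he
      obtain ⟨w, -, rfl⟩ := he; simp
    have hynB : ∀ e ∈ B, y ∉ e := by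
      rintro e he
      simp only [hB, Finset.mem_image, Finset.mem_sdiff, Finset.mem_insert,
        Finset.mem_singleton, not_or] at he
      obtain ⟨w, ⟨-, hw1, hw2, -⟩, rfl⟩ := he
      simp only [Finset.mem_insert, Finset.mem_singleton, not_or]
      exact ⟨(Ne.symm hxy), hyz, fun h => hw2 h.symm⟩
    have hynC : ∀ e ∈ C, y ∉ e ∧ z ∉ e := by
      rintro e he
      simp only [hC, Finset.mem_image, Finset.mem_sdiff, Finset.mem_insert,
        Finset.mem_singleton, not_or] at he
      obtain ⟨w, ⟨-, hw1, hw2, hw3, -⟩, rfl⟩ := he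
      constructor <;> simp only [Finset.mem_insert, Finset.mem_singleton, not_or]
      · exact ⟨(Ne.symm hxy), hyv, fun h => hw2 h.symm⟩
      · exact ⟨(Ne.symm hxz), hzv, fun h => hw3 h.symm⟩
    have hzB : ∀ e ∈ B, z ∈ e := by
      rintro e he
      simp only [hB, Finset.mem_image] at he
      obtain ⟨w, -, rfl⟩ := he; simp
    have hdAB : Disjoint A B :=
      Finset.disjoint_left.mpr fun e ha hb => hynB e hb (hyA e ha)
    have hdABC : Disjoint (A ∪ B) C := by
      rw [Finset.disjoint_union_left]
      exact ⟨Finset.disjoint_left.mpr fun e ha hc => (hynC e hc).1 (hyA e ha),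
        Finset.disjoint_left.mpr fun e hb hc => (hynC e hc).2 (hzB e hb)⟩
    have hcardA : A.card = n - 2 := by
      rw [hA, Finset.card_image_of_injOn, Finset.card_sdiff_of_subset (by simp), Finset.card_univ, hcard]
      · congr 1
        rw [Finset.card_insert_of_notMem (by simp [hxy]), Finset.card_singleton]
      · intro a ha b hb hab
        simp only [Finset.coe_sdiff, Finset.coe_univ, Set.mem_diff, Set.mem_univ,
          Finset.coe_insert, Set.mem_insert_iff, Finset.coe_singleton, Set.mem_singleton_iff,
          not_or, true_and] at ha hb
        have hab' : ({x, y, a} : Finset V) = {x, y, b} := hab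
        have : a ∈ ({x, y, b} : Finset V) := hab' ▸ (by simp : a ∈ ({x, y, a} : Finset V))
        simp only [Finset.mem_insert, Finset.mem_singleton] at this
        tauto
    have hcardB : B.card = n - 3 := by
      rw [hB, Finset.card_image_of_injOn, Finset.card_sdiff_of_subset (by simp), Finset.card_univ, hcard]
      · congr 1
        rw [Finset.card_insert_of_notMem (by simp [hxy, hxz]),
          Finset.card_insert_of_notMem (by simp [hyz]), Finset.card_singleton]
      · intro a ha b hb hab
        simp only [Finset.coe_sdiff, Finset.coe_univ, Set.mem_diff, Set.mem_univ,
          Finset.coe_insert, Set.mem_insert_iff, Finset.coe_singleton, Set.mem_singleton_iff,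
          not_or, true_and] at ha hb
        have hab' : ({x, z, a} : Finset V) = {x, z, b} := hab
        have : a ∈ ({x, z, b} : Finset V) := hab' ▸ (by simp : a ∈ ({x, z, a} : Finset V))
        simp only [Finset.mem_insert, Finset.mem_singleton] at this
        tauto
    have hcardC : C.card = n - 4 := by
      rw [hC, Finset.card_image_of_injOn, Finset.card_sdiff_of_subset (by simp), Finset.card_univ, hcard]
      · congr 1
        rw [Finset.card_insert_of_notMem (by simp [hxy, hxz, hxv]),
          Finset.card_insert_of_notMem (by simp [hyz, hyv]),
          Finset.card_insert_of_notMem (by simp [hzv]), Finset.card_singleton]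
      · intro a ha b hb hab
        simp only [Finset.coe_sdiff, Finset.coe_univ, Set.mem_diff, Set.mem_univ,
          Finset.coe_insert, Set.mem_insert_iff, Finset.coe_singleton, Set.mem_singleton_iff,
          not_or, true_and] at ha hb
        have hab' : ({x, v, a} : Finset V) = {x, v, b} := hab
        have : a ∈ ({x, v, b} : Finset V) := hab' ▸ (by simp : a ∈ ({x, v, a} : Finset V))
        simp only [Finset.mem_insert, Finset.mem_singleton] at this
        tauto
    rw [hHcard, hFA, Finset.card_union_of_disjoint hdABC,
      Finset.card_union_of_disjoint hdAB, hcardA, hcardB, hcardC]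
    omega
end

section
/- For n ≥ 7, the 3-graph H_3(n) = up({x,y}) ∪ up({x,z}) ∪ {{x,v,w}, {y,z,w}, {y,z,v}} on n vertices is intersecting, has exactly 2n - 2 edges, and is maximal intersecting. -/
lemma H3aux_eq_three {V : Type*} [DecidableEq V] {s : Finset V} (hs : s.card = 3)
    {a b c : V} (ha : a ∈ s) (hb : b ∈ s) (hc : c ∈ s)
    (hab : a ≠ b) (hac : a ≠ c) (hbc : b ≠ c) : s = {a, b, c} := by
  symm
  apply Finset.eq_of_subset_of_card_le
  · intro u hu
    simp only [Finset.mem_insert, Finset.mem_singleton] at hu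
    rcases hu with rfl | rfl | rfl <;> assumption
  · rw [hs, Finset.card_insert_of_notMem (by simp [hab, hac]),
      Finset.card_insert_of_notMem (by simp [hbc]), Finset.card_singleton]

lemma H3aux_count {V : Type*} [Fintype V] [DecidableEq V] (a b : V) (hab : a ≠ b) :
    ((Finset.univ.powersetCard 3).filter (fun e => ({a, b} : Finset V) ⊆ e)).card
      = Fintype.card V - 2 := by
  have hab2 : ({a, b} : Finset V).card = 2 := by
    rw [Finset.card_insert_of_notMem (by simp [hab]), Finset.card_singleton]
  have himg : (Finset.univ.powersetCard 3).filter (fun e => ({a, b} : Finset V) ⊆ e)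
      = ({a, b} : Finset V)ᶜ.image (fun t => insert t {a, b}) := by
    ext e
    simp only [Finset.mem_filter, Finset.mem_powersetCard_univ, Finset.mem_image,
      Finset.mem_compl]
    constructor
    · rintro ⟨h3, hsub⟩
      have h1 : (e \ {a, b}).card = 1 := by
        rw [Finset.card_sdiff_of_subset hsub, h3, hab2]
      obtain ⟨t, ht⟩ := Finset.card_eq_one.mp h1
      have htm : t ∈ e \ ({a, b} : Finset V) := ht ▸ Finset.mem_singleton_self t
      rw [Finset.mem_sdiff] at htm
      refine ⟨t, htm.2, ?_⟩
      apply Finset.eq_of_subset_of_card_le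
      · intro u hu
        rcases Finset.mem_insert.mp hu with rfl | hu
        · exact htm.1
        · exact hsub hu
      · rw [h3, Finset.card_insert_of_notMem htm.2, hab2]
    · rintro ⟨t, ht, rfl⟩
      exact ⟨by rw [Finset.card_insert_of_notMem ht, hab2], Finset.subset_insert _ _⟩
  rw [himg, Finset.card_image_of_injOn, Finset.card_compl, hab2]
  intro s hs t ht hst
  simp only [Finset.coe_compl, Set.mem_compl_iff, Finset.mem_coe] at hs ht
  simp only at hst
  have h : s ∈ insert t ({a, b} : Finset V) := by
    rw [← hst]; exact Finset.mem_insert_self _ _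
  rcases Finset.mem_insert.mp h with h | h
  · exact h
  · exact absurd h hs


/-- For `n ≥ 7`, the 3-graph
`H₃(n) = up({x,y}) ∪ up({x,z}) ∪ {{x,v,w},{y,z,w},{y,z,v}}` is intersecting,
has exactly `2n - 2` edges, and is maximal intersecting. -/
theorem H3_maximal_intersecting_card {V : Type*} [Fintype V] [DecidableEq V]
    (n : ℕ) (hn : 7 ≤ n) (hcard : Fintype.card V = n)
    (x y z v w : V) (hnodup : ([x, y, z, v, w] : List V).Nodup)
    (H : Finset (Finset V))
    (hH : H = (Finset.univ.powersetCard 3).filter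
        (fun e => ({x, y} : Finset V) ⊆ e ∨ ({x, z} : Finset V) ⊆ e) ∪
        {({x, v, w} : Finset V), {y, z, w}, {y, z, v}}) :
    (∀ e ∈ H, ∀ f ∈ H, (e ∩ f).Nonempty) ∧ H.card = 2 * n - 2 ∧
    (∀ e : Finset V, e.card = 3 → e ∉ H → ∃ f ∈ H, e ∩ f = ∅) := by
  simp only [List.nodup_cons, List.mem_cons, List.mem_singleton, List.not_mem_nil, or_false,
    List.nodup_nil, and_true, not_or] at hnodup
  obtain ⟨⟨hxy, hxz, hxv, hxw⟩, ⟨hyz, hyv, hyw⟩, ⟨hzv, hzw⟩, hvw, -⟩ := hnodup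
  -- membership characterization
  have hmemH : ∀ e : Finset V, e ∈ H ↔
      (e.card = 3 ∧ (({x, y} : Finset V) ⊆ e ∨ ({x, z} : Finset V) ⊆ e)) ∨
      e = {x, v, w} ∨ e = {y, z, w} ∨ e = {y, z, v} := by
    intro e
    rw [hH]
    simp [Finset.mem_union, Finset.mem_filter, Finset.mem_powersetCard_univ,
      Finset.mem_insert, Finset.mem_singleton, and_assoc]
    tauto
  have hsubxy : ∀ e : Finset V, ({x, y} : Finset V) ⊆ e ↔ x ∈ e ∧ y ∈ e := by
    intro e; rw [Finset.insert_subset_iff, Finset.singleton_subset_iff]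
  have hsubxz : ∀ e : Finset V, ({x, z} : Finset V) ⊆ e ↔ x ∈ e ∧ z ∈ e := by
    intro e; rw [Finset.insert_subset_iff, Finset.singleton_subset_iff]
  -- key membership facts
  have key1 : ∀ e ∈ H, x ∈ e ∨ e = {y, z, w} ∨ e = {y, z, v} := by
    intro e he
    rcases (hmemH e).mp he with ⟨_, h | h⟩ | rfl | rfl | rfl
    · exact Or.inl ((hsubxy e).mp h).1
    · exact Or.inl ((hsubxz e).mp h).1
    · exact Or.inl (by simp)
    · exact Or.inr (Or.inl rfl)
    · exact Or.inr (Or.inr rfl)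
  have key2 : ∀ e ∈ H, y ∈ e ∨ z ∈ e ∨ e = {x, v, w} := by
    intro e he
    rcases (hmemH e).mp he with ⟨_, h | h⟩ | rfl | rfl | rfl
    · exact Or.inl ((hsubxy e).mp h).2
    · exact Or.inr (Or.inl ((hsubxz e).mp h).2)
    · exact Or.inr (Or.inr rfl)
    · exact Or.inl (by simp)
    · exact Or.inl (by simp)
  refine ⟨?_, ?_, ?_⟩
  · -- intersecting
    intro e he f hf
    rcases key1 e he with hxe | rfl | rfl
    · rcases key1 f hf with hxf | rfl | rfl
      · exact ⟨x, Finset.mem_inter.mpr ⟨hxe, hxf⟩⟩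
      · rcases key2 e he with h | h | rfl
        · exact ⟨y, Finset.mem_inter.mpr ⟨h, by simp⟩⟩
        · exact ⟨z, Finset.mem_inter.mpr ⟨h, by simp⟩⟩
        · exact ⟨w, Finset.mem_inter.mpr ⟨by simp, by simp⟩⟩
      · rcases key2 e he with h | h | rfl
        · exact ⟨y, Finset.mem_inter.mpr ⟨h, by simp⟩⟩
        · exact ⟨z, Finset.mem_inter.mpr ⟨h, by simp⟩⟩
        · exact ⟨v, Finset.mem_inter.mpr ⟨by simp, by simp⟩⟩
    · rcases key2 f hf with h | h | rfl
      · exact ⟨y, Finset.mem_inter.mpr ⟨by simp, h⟩⟩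
      · exact ⟨z, Finset.mem_inter.mpr ⟨by simp, h⟩⟩
      · exact ⟨w, Finset.mem_inter.mpr ⟨by simp, by simp⟩⟩
    · rcases key2 f hf with h | h | rfl
      · exact ⟨y, Finset.mem_inter.mpr ⟨by simp, h⟩⟩
      · exact ⟨z, Finset.mem_inter.mpr ⟨by simp, h⟩⟩
      · exact ⟨v, Finset.mem_inter.mpr ⟨by simp, by simp⟩⟩
  · -- cardinality
    subst hH
    have hyx := Ne.symm hxy
    have hzx := Ne.symm hxz
    have hvx := Ne.symm hxv
    have hwx := Ne.symm hxw
    have hzy := Ne.symm hyz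
    have hvy := Ne.symm hyv
    have hwy := Ne.symm hyw
    have hvz := Ne.symm hzv
    have hwz := Ne.symm hzw
    have hwv := Ne.symm hvw
    have hA1 := H3aux_count x y hxy
    have hA2 := H3aux_count x z hxz
    set A1 := (Finset.univ.powersetCard 3).filter (fun e => ({x, y} : Finset V) ⊆ e) with hA1def
    set A2 := (Finset.univ.powersetCard 3).filter (fun e => ({x, z} : Finset V) ⊆ e) with hA2def
    have hint : A1 ∩ A2 = {({x, y, z} : Finset V)} := by
      ext e
      rw [Finset.mem_inter, hA1def, hA2def, Finset.mem_filter, Finset.mem_filter,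
        Finset.mem_powersetCard_univ, hsubxy, hsubxz, Finset.mem_singleton]
      constructor
      · rintro ⟨⟨h3, hx', hy'⟩, -, -, hz'⟩
        exact H3aux_eq_three h3 hx' hy' hz' hxy hxz hyz
      · rintro rfl
        have h3 : ({x, y, z} : Finset V).card = 3 := by
          rw [Finset.card_insert_of_notMem (by simp [hxy, hxz]),
            Finset.card_insert_of_notMem (by simp [hyz]), Finset.card_singleton]
        exact ⟨⟨h3, by simp, by simp⟩, h3, by simp, by simp⟩
    have hAcard : (A1 ∪ A2).card = 2 * n - 5 := by
      have h := Finset.card_union_add_card_inter A1 A2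
      rw [hint, Finset.card_singleton, hA1, hA2, hcard] at h
      omega
    have hBne1 : ({x, v, w} : Finset V) ≠ {y, z, w} := by
      intro h
      have hm : x ∈ ({y, z, w} : Finset V) := h ▸ (by simp)
      simp [hxy, hxz, hxw] at hm
    have hBne2 : ({x, v, w} : Finset V) ≠ {y, z, v} := by
      intro h
      have hm : x ∈ ({y, z, v} : Finset V) := h ▸ (by simp)
      simp [hxy, hxz, hxv] at hm
    have hBne3 : ({y, z, w} : Finset V) ≠ {y, z, v} := by
      intro h
      have hm : w ∈ ({y, z, v} : Finset V) := h ▸ (by simp)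
      simp [hwy, hwz, hwv] at hm
    have hBcard : ({({x, v, w} : Finset V), {y, z, w}, {y, z, v}} : Finset (Finset V)).card = 3 := by
      rw [Finset.card_insert_of_notMem (by simp [hBne1, hBne2]),
        Finset.card_insert_of_notMem (by simp [hBne3]), Finset.card_singleton]
    have hdisj : Disjoint (A1 ∪ A2)
        ({({x, v, w} : Finset V), {y, z, w}, {y, z, v}} : Finset (Finset V)) := by
      rw [Finset.disjoint_right]
      intro e heB heA
      rw [Finset.mem_union, hA1def, hA2def, Finset.mem_filter, Finset.mem_filter,
        hsubxy, hsubxz] at heA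
      simp only [Finset.mem_insert, Finset.mem_singleton] at heB
      rcases heB with rfl | rfl | rfl <;>
        rcases heA with ⟨-, hm1, hm2⟩ | ⟨-, hm1, hm2⟩ <;>
        simp [hxy, hxz, hxv, hxw, hyx, hzx, hvx, hwx, hyz, hyv, hyw, hzy, hvy, hwy,
          hzv, hzw, hvz, hwz, hvw, hwv] at hm1 hm2
    rw [Finset.filter_or, Finset.card_union_of_disjoint hdisj, hAcard, hBcard]
    omega
  · -- maximality
    intro e he3 heH
    rw [hmemH e] at heH
    push_neg at heH
    obtain ⟨hA, hne1, hne2, hne3⟩ := heH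
    obtain ⟨hP, hQ⟩ := hA he3
    rw [hsubxy] at hP
    rw [hsubxz] at hQ
    have hcompl : ∀ s : Finset V, s.card ≤ 5 → sᶜ.Nonempty := by
      intro s hs
      rw [← Finset.card_pos, Finset.card_compl]
      omega
    by_cases hx : x ∈ e
    · have hy : y ∉ e := fun hy => hP ⟨hx, hy⟩
      have hz : z ∉ e := fun hz => hQ ⟨hx, hz⟩
      by_cases hv : v ∈ e
      · have hw : w ∉ e := fun hw =>
          hne1 (H3aux_eq_three he3 hx hv hw hxv hxw hvw)
        refine ⟨{y, z, w}, (hmemH _).mpr (Or.inr (Or.inr (Or.inl rfl))), ?_⟩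
        rw [Finset.eq_empty_iff_forall_notMem]
        intro u hu
        rw [Finset.mem_inter] at hu
        obtain ⟨hue, huf⟩ := hu
        simp only [Finset.mem_insert, Finset.mem_singleton] at huf
        rcases huf with rfl | rfl | rfl <;> [exact hy hue; exact hz hue; exact hw hue]
      · refine ⟨{y, z, v}, (hmemH _).mpr (Or.inr (Or.inr (Or.inr rfl))), ?_⟩
        rw [Finset.eq_empty_iff_forall_notMem]
        intro u hu
        rw [Finset.mem_inter] at hu
        obtain ⟨hue, huf⟩ := hu
        simp only [Finset.mem_insert, Finset.mem_singleton] at huf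
        rcases huf with rfl | rfl | rfl <;> [exact hy hue; exact hz hue; exact hv hue]
    · by_cases hy : y ∈ e
      · by_cases hz : z ∈ e
        · have hv : v ∉ e := fun hv =>
            hne3 (H3aux_eq_three he3 hy hz hv hyz hyv hzv)
          have hw : w ∉ e := fun hw =>
            hne2 (H3aux_eq_three he3 hy hz hw hyz hyw hzw)
          refine ⟨{x, v, w}, (hmemH _).mpr (Or.inr (Or.inl rfl)), ?_⟩
          rw [Finset.eq_empty_iff_forall_notMem]
          intro u hu
          rw [Finset.mem_inter] at hu
          obtain ⟨hue, huf⟩ := hu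
          simp only [Finset.mem_insert, Finset.mem_singleton] at huf
          rcases huf with rfl | rfl | rfl <;> [exact hx hue; exact hv hue; exact hw hue]
        · -- y ∈ e, z ∉ e : pick t outside e ∪ {x, z}
          obtain ⟨t, ht⟩ := hcompl (e ∪ {x, z}) (by
            refine le_trans (Finset.card_union_le _ _) ?_
            have : ({x, z} : Finset V).card ≤ 2 :=
              le_trans (Finset.card_insert_le _ _) (by simp)
            omega)
          rw [Finset.mem_compl, Finset.mem_union, Finset.mem_insert,
            Finset.mem_singleton] at ht
          push_neg at ht
          obtain ⟨hte, htx, htz⟩ := ht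
          refine ⟨{x, z, t}, (hmemH _).mpr (Or.inl ⟨?_, Or.inr ((hsubxz _).mpr ⟨by simp, by simp⟩)⟩), ?_⟩
          · rw [Finset.card_insert_of_notMem (by simp [hxz, Ne.symm htx]),
              Finset.card_insert_of_notMem (by simp [Ne.symm htz]), Finset.card_singleton]
          · rw [Finset.eq_empty_iff_forall_notMem]
            intro u hu
            rw [Finset.mem_inter] at hu
            obtain ⟨hue, huf⟩ := hu
            simp only [Finset.mem_insert, Finset.mem_singleton] at huf
            rcases huf with rfl | rfl | rfl <;> [exact hx hue; exact hz hue; exact hte hue]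
      · -- y ∉ e : pick t outside e ∪ {x, y}
        obtain ⟨t, ht⟩ := hcompl (e ∪ {x, y}) (by
          refine le_trans (Finset.card_union_le _ _) ?_
          have : ({x, y} : Finset V).card ≤ 2 :=
            le_trans (Finset.card_insert_le _ _) (by simp)
          omega)
        rw [Finset.mem_compl, Finset.mem_union, Finset.mem_insert,
          Finset.mem_singleton] at ht
        push_neg at ht
        obtain ⟨hte, htx, hty⟩ := ht
        refine ⟨{x, y, t}, (hmemH _).mpr (Or.inl ⟨?_, Or.inl ((hsubxy _).mpr ⟨by simp, by simp⟩)⟩), ?_⟩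
        · rw [Finset.card_insert_of_notMem (by simp [hxy, Ne.symm htx]),
            Finset.card_insert_of_notMem (by simp [Ne.symm hty]), Finset.card_singleton]
        · rw [Finset.eq_empty_iff_forall_notMem]
          intro u hu
          rw [Finset.mem_inter] at hu
          obtain ⟨hue, huf⟩ := hu
          simp only [Finset.mem_insert, Finset.mem_singleton] at huf
          rcases huf with rfl | rfl | rfl <;> [exact hx hue; exact hy hue; exact hte hue]
end

section
/- For n ≥ 7, if H is a maximal intersecting 3-uniform hypergraph on n vertices containing a copy C of the triangle C_3 such that V(C) is a heart of H, then the induced subhypergraph H[V(C)] is a maximal intersecting 3-graph on 6 vertices containing C_3, and H consists of H[V(C)] together with all 3-subsets of V containing a 2-element vertex cover of H[V(C)]. -/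
private lemma tri_aux {V : Type*} (x₁ x₂ x₃ y₁ y₂ y₃ v : V)
    (h12 : x₁ ≠ x₂) (h13 : x₁ ≠ x₃) (h23 : x₂ ≠ x₃)
    (h1a : x₁ ≠ y₁) (h1b : x₁ ≠ y₂) (h1c : x₁ ≠ y₃)
    (h2a : x₂ ≠ y₁) (h2b : x₂ ≠ y₂) (h2c : x₂ ≠ y₃)
    (h3a : x₃ ≠ y₁) (h3b : x₃ ≠ y₂) (h3c : x₃ ≠ y₃)
    (hab : y₁ ≠ y₂) (hac : y₁ ≠ y₃) (hbc : y₂ ≠ y₃)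
    (m1 : v = x₁ ∨ v = y₃ ∨ v = x₂) (m2 : v = x₁ ∨ v = y₂ ∨ v = x₃)
    (m3 : v = x₂ ∨ v = y₁ ∨ v = x₃) : False := by
  rcases m1 with rfl | rfl | rfl <;> rcases m2 with h | h | h <;>
    rcases m3 with h' | h' | h' <;> simp_all


/-- For `n ≥ 7`, if `H` is a maximal intersecting 3-graph on `n` vertices
containing a copy `C` of the triangle `C₃` whose vertex set `U` is a heart of
`H`, then the induced subhypergraph `H[U]` is a maximal intersecting 3-graph
on `U` containing `C`, and `H` consists of `H[U]` together with all 3-subsets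
of `V` containing a 2-element vertex cover of `H[U]`. -/
theorem heart_triangle_structure {V : Type*} [Fintype V] [DecidableEq V]
    (n : ℕ) (hn : 7 ≤ n) (hcard : Fintype.card V = n)
    (H : Finset (Finset V))
    (huniform : ∀ e ∈ H, e.card = 3)
    (hint : ∀ e ∈ H, ∀ f ∈ H, (e ∩ f).Nonempty)
    (hmax : ∀ e : Finset V, e.card = 3 → e ∉ H → ∃ f ∈ H, e ∩ f = ∅)
    (x₁ x₂ x₃ y₁ y₂ y₃ : V)
    (hnodup : ([x₁, x₂, x₃, y₁, y₂, y₃] : List V).Nodup)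
    (hC₁ : ({x₁, y₃, x₂} : Finset V) ∈ H)
    (hC₂ : ({x₁, y₂, x₃} : Finset V) ∈ H)
    (hC₃ : ({x₂, y₁, x₃} : Finset V) ∈ H)
    (U : Finset V) (hU : U = {x₁, x₂, x₃, y₁, y₂, y₃})
    (hheart : ∀ e ∈ H, ∀ f ∈ H, (e ∩ f ∩ U).Nonempty) :
    (∀ e ∈ H.filter (· ⊆ U), ∀ f ∈ H.filter (· ⊆ U), (e ∩ f).Nonempty) ∧
    (∀ e : Finset V, e ⊆ U → e.card = 3 → e ∉ H.filter (· ⊆ U) →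
      ∃ f ∈ H.filter (· ⊆ U), e ∩ f = ∅) ∧
    ({x₁, y₃, x₂} : Finset V) ∈ H.filter (· ⊆ U) ∧
    ({x₁, y₂, x₃} : Finset V) ∈ H.filter (· ⊆ U) ∧
    ({x₂, y₁, x₃} : Finset V) ∈ H.filter (· ⊆ U) ∧
    (∀ e : Finset V, e ∈ H ↔ (e ∈ H.filter (· ⊆ U) ∨
      (e.card = 3 ∧ ∃ T : Finset V, T.card = 2 ∧
        (∀ f ∈ H.filter (· ⊆ U), (T ∩ f).Nonempty) ∧ T ⊆ e))) := by
  classical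
  have hnd := hnodup
  simp only [List.nodup_cons, List.mem_cons, List.not_mem_nil, or_false, not_or,
    List.mem_singleton, List.nodup_nil, and_true] at hnd
  obtain ⟨⟨h12, h13, h1a, h1b, h1c⟩, ⟨h23, h2a, h2b, h2c⟩, ⟨h3a, h3b, h3c⟩,
    ⟨hab, hac⟩, hbc, -⟩ := hnd
  -- card U = 6
  have hUcard : U.card = 6 := by
    have : U = ([x₁, x₂, x₃, y₁, y₂, y₃] : List V).toFinset := by
      rw [hU]; simp
    rw [this, List.toFinset_card_of_nodup hnodup]
    rfl
  -- triangle edges are inside U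
  have hs1 : ({x₁, y₃, x₂} : Finset V) ⊆ U := by
    rw [hU]; intro z hz; simp at hz ⊢; tauto
  have hs2 : ({x₁, y₂, x₃} : Finset V) ⊆ U := by
    rw [hU]; intro z hz; simp at hz ⊢; tauto
  have hs3 : ({x₂, y₁, x₃} : Finset V) ⊆ U := by
    rw [hU]; intro z hz; simp at hz ⊢; tauto
  -- maximality within U
  have hmaxU : ∀ e : Finset V, e ⊆ U → e.card = 3 → e ∉ H →
      ∃ f ∈ H, f ⊆ U ∧ e ∩ f = ∅ := by
    intro e heU he3 heH
    by_cases hg : U \ e ∈ H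
    · refine ⟨U \ e, hg, Finset.sdiff_subset, ?_⟩
      ext z; simp [Finset.mem_sdiff]
    · exfalso
      obtain ⟨h, hh, hgh⟩ := hmax (U \ e)
        (by rw [Finset.card_sdiff_of_subset heU, hUcard, he3]) hg
      obtain ⟨f, hf, hef⟩ := hmax e he3 heH
      obtain ⟨v, hv⟩ := hheart f hf h hh
      simp only [Finset.mem_inter] at hv
      by_cases hve : v ∈ e
      · have : v ∈ e ∩ f := Finset.mem_inter.2 ⟨hve, hv.1.1⟩
        rw [hef] at this; simp at this
      · have : v ∈ (U \ e) ∩ h := Finset.mem_inter.2 ⟨Finset.mem_sdiff.2 ⟨hv.2, hve⟩, hv.1.2⟩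
        rw [hgh] at this; simp at this
  -- a cross edge meets U in exactly two vertices
  have hcross : ∀ e ∈ H, ¬ e ⊆ U → (e ∩ U).card = 2 := by
    intro e he hnsub
    have h3 := huniform e he
    have hle : (e ∩ U).card ≤ 3 := by
      calc (e ∩ U).card ≤ e.card := Finset.card_le_card Finset.inter_subset_left
        _ = 3 := h3
    have hne : (e ∩ U).Nonempty := by
      obtain ⟨v, hv⟩ := hheart e he e he
      simp only [Finset.mem_inter] at hv
      exact ⟨v, Finset.mem_inter.2 ⟨hv.1.1, hv.2⟩⟩
    have h1 : 1 ≤ (e ∩ U).card := Finset.card_pos.2 hne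
    have hne3 : (e ∩ U).card ≠ 3 := by
      intro hc
      apply hnsub
      have : e ∩ U = e := Finset.eq_of_subset_of_card_le Finset.inter_subset_left
        (by omega)
      exact Finset.inter_eq_left.mp this
    have hne1 : (e ∩ U).card ≠ 1 := by
      intro hc
      obtain ⟨v, hveq⟩ := Finset.card_eq_one.mp hc
      have hvf : ∀ f ∈ H, f ⊆ U → v ∈ f := by
        intro f hf hfU
        obtain ⟨w, hw⟩ := hheart e he f hf
        simp only [Finset.mem_inter] at hw
        have : w ∈ e ∩ U := Finset.mem_inter.2 ⟨hw.1.1, hw.2⟩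
        rw [hveq] at this
        simp at this
        subst this
        exact hw.1.2
      have m1 := hvf _ hC₁ hs1
      have m2 := hvf _ hC₂ hs2
      have m3 := hvf _ hC₃ hs3
      simp only [Finset.mem_insert, Finset.mem_singleton] at m1 m2 m3
      exact tri_aux x₁ x₂ x₃ y₁ y₂ y₃ v h12 h13 h23 h1a h1b h1c h2a h2b h2c
        h3a h3b h3c hab hac hbc m1 m2 m3
    omega
  -- a cross edge's trace on U covers H[U]
  have hcrosscov : ∀ e ∈ H, ∀ f ∈ H, f ⊆ U → ((e ∩ U) ∩ f).Nonempty := by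
    intro e he f hf hfU
    obtain ⟨w, hw⟩ := hheart e he f hf
    simp only [Finset.mem_inter] at hw
    exact ⟨w, Finset.mem_inter.2 ⟨Finset.mem_inter.2 ⟨hw.1.1, hw.2⟩, hw.1.2⟩⟩
  -- a two-element cover of H[U] lies inside U
  have hcovU : ∀ T : Finset V, T.card = 2 →
      (∀ f ∈ H, f ⊆ U → (T ∩ f).Nonempty) → T ⊆ U := by
    intro T hT2 hTcov
    obtain ⟨a, b, habn, rfl⟩ := Finset.card_eq_two.mp hT2
    have key : ∀ t ∈ ({a, b} : Finset V), t ∈ U := by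
      intro t ht
      by_contra htU
      have hoth : ∀ f ∈ H, f ⊆ U → ∃ w ∈ ({a, b} : Finset V), w ≠ t ∧ w ∈ f := by
        intro f hf hfU
        obtain ⟨w, hw⟩ := hTcov f hf hfU
        simp only [Finset.mem_inter] at hw
        refine ⟨w, hw.1, ?_, hw.2⟩
        intro hwt; subst hwt; exact htU (hfU hw.2)
      simp only [Finset.mem_insert, Finset.mem_singleton] at ht
      obtain ⟨w1, hw1m, hw1t, hw1⟩ := hoth _ hC₁ hs1
      obtain ⟨w2, hw2m, hw2t, hw2⟩ := hoth _ hC₂ hs2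
      obtain ⟨w3, hw3m, hw3t, hw3⟩ := hoth _ hC₃ hs3
      simp only [Finset.mem_insert, Finset.mem_singleton] at hw1m hw2m hw3m
      -- all of w1, w2, w3 are the element of {a,b} other than t
      have hw12 : w1 = w2 := by
        rcases ht with rfl | rfl <;> rcases hw1m with rfl | rfl <;>
          rcases hw2m with rfl | rfl <;>
          first
          | rfl
          | (exact absurd rfl hw1t)
          | (exact absurd rfl hw2t)
      have hw13 : w1 = w3 := by
        rcases ht with rfl | rfl <;> rcases hw1m with rfl | rfl <;>
          rcases hw3m with rfl | rfl <;>
          first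
          | rfl
          | (exact absurd rfl hw1t)
          | (exact absurd rfl hw3t)
      rw [← hw12] at hw2
      rw [← hw13] at hw3
      simp only [Finset.mem_insert, Finset.mem_singleton] at hw1 hw2 hw3
      exact tri_aux x₁ x₂ x₃ y₁ y₂ y₃ w1 h12 h13 h23 h1a h1b h1c h2a h2b h2c
        h3a h3b h3c hab hac hbc hw1 hw2 hw3
    intro t ht; exact key t ht
  -- there are no two disjoint 2-element covers of H[U]
  have hnodisj : ∀ T T' : Finset V, T.card = 2 → T'.card = 2 → T ⊆ U → T' ⊆ U →
      (∀ f ∈ H, f ⊆ U → (T ∩ f).Nonempty) → (∀ f ∈ H, f ⊆ U → (T' ∩ f).Nonempty) →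
      (T ∩ T').Nonempty := by
    intro T T' hT hT' hTU hT'U hTc hT'c
    by_contra hdisj
    rw [Finset.not_nonempty_iff_eq_empty] at hdisj
    have hdisj' : Disjoint T T' := Finset.disjoint_iff_inter_eq_empty.2 hdisj
    have hcard4 : (T ∪ T').card = 4 := by
      rw [Finset.card_union_of_disjoint hdisj', hT, hT']
    have hsd : (U \ (T ∪ T')).card = 2 := by
      rw [Finset.card_sdiff_of_subset (Finset.union_subset hTU hT'U), hUcard, hcard4]
    have : (U \ (T ∪ T')).Nonempty := Finset.card_pos.1 (by omega)
    obtain ⟨a, ha⟩ := this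
    simp only [Finset.mem_sdiff, Finset.mem_union, not_or] at ha
    obtain ⟨haU, haT, haT'⟩ := ha
    set g := insert a T with hgdef
    have hgcard : g.card = 3 := by
      rw [Finset.card_insert_of_notMem haT, hT]
    have hgU : g ⊆ U := Finset.insert_subset haU hTU
    have hgH : g ∉ H := by
      intro hgH
      obtain ⟨w, hw⟩ := hT'c g hgH hgU
      simp only [hgdef, Finset.mem_inter, Finset.mem_insert] at hw
      rcases hw.2 with rfl | hwT
      · exact haT' hw.1
      · have : w ∈ T ∩ T' := Finset.mem_inter.2 ⟨hwT, hw.1⟩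
        rw [hdisj] at this; simp at this
    obtain ⟨h, hhH, hhU, hgh⟩ := hmaxU g hgU hgcard hgH
    have hhsub : h ⊆ U \ g := by
      intro z hz
      refine Finset.mem_sdiff.2 ⟨hhU hz, fun hzg => ?_⟩
      have : z ∈ g ∩ h := Finset.mem_inter.2 ⟨hzg, hz⟩
      rw [hgh] at this; simp at this
    have hheq : h = U \ g := Finset.eq_of_subset_of_card_le hhsub
      (by rw [Finset.card_sdiff_of_subset hgU, hUcard, hgcard, huniform h hhH])
    obtain ⟨w, hw⟩ := hTc h hhH hhU
    simp only [Finset.mem_inter] at hw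
    have hwg : w ∈ g := Finset.mem_insert_of_mem hw.1
    have := hw.2
    rw [hheq] at this
    exact (Finset.mem_sdiff.1 this).2 hwg
  -- assemble
  refine ⟨?_, ?_, ?_, ?_, ?_, ?_⟩
  · intro e he f hf
    rw [Finset.mem_filter] at he hf
    obtain ⟨v, hv⟩ := hheart e he.1 f hf.1
    simp only [Finset.mem_inter] at hv
    exact ⟨v, Finset.mem_inter.2 hv.1⟩
  · intro e heU he3 henot
    have heH : e ∉ H := fun h => henot (Finset.mem_filter.2 ⟨h, heU⟩)
    obtain ⟨f, hf, hfU, hef⟩ := hmaxU e heU he3 heH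
    exact ⟨f, Finset.mem_filter.2 ⟨hf, hfU⟩, hef⟩
  · exact Finset.mem_filter.2 ⟨hC₁, hs1⟩
  · exact Finset.mem_filter.2 ⟨hC₂, hs2⟩
  · exact Finset.mem_filter.2 ⟨hC₃, hs3⟩
  · intro e
    constructor
    · intro he
      by_cases heU : e ⊆ U
      · exact Or.inl (Finset.mem_filter.2 ⟨he, heU⟩)
      · refine Or.inr ⟨huniform e he, e ∩ U, hcross e he heU, ?_, Finset.inter_subset_left⟩
        intro f hf
        rw [Finset.mem_filter] at hf
        exact hcrosscov e he f hf.1 hf.2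
    · rintro (he | ⟨he3, T, hT2, hTcov, hTe⟩)
      · exact (Finset.mem_filter.1 he).1
      · by_contra heH
        obtain ⟨f, hfH, hef⟩ := hmax e he3 heH
        have hTcov' : ∀ g ∈ H, g ⊆ U → (T ∩ g).Nonempty := by
          intro g hg hgU
          exact hTcov g (Finset.mem_filter.2 ⟨hg, hgU⟩)
        have hTU : T ⊆ U := hcovU T hT2 hTcov'
        have hTf : T ∩ f = ∅ := by
          apply Finset.eq_empty_of_forall_notMem
          intro z hz
          simp only [Finset.mem_inter] at hz
          have : z ∈ e ∩ f := Finset.mem_inter.2 ⟨hTe hz.1, hz.2⟩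
          rw [hef] at this; simp at this
        by_cases hfU : f ⊆ U
        · obtain ⟨w, hw⟩ := hTcov' f hfH hfU
          rw [hTf] at hw; simp at hw
        · have hT'2 : (f ∩ U).card = 2 := hcross f hfH hfU
          have hT'cov : ∀ g ∈ H, g ⊆ U → ((f ∩ U) ∩ g).Nonempty :=
            fun g hg hgU => hcrosscov f hfH g hg hgU
          obtain ⟨w, hw⟩ := hnodisj T (f ∩ U) hT2 hT'2 hTU Finset.inter_subset_right
            hTcov' hT'cov
          simp only [Finset.mem_inter] at hw
          have : w ∈ T ∩ f := Finset.mem_inter.2 ⟨hw.1, hw.2.1⟩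
          rw [hTf] at this; simp at this
end

section
/- If H is a maximal intersecting 3-uniform hypergraph on n ≥ 6 vertices containing a copy of the triangle C_3, then the minimum vertex cover size of H is either 2 or 3 (in particular, no single vertex covers all edges). -/
/-- If `H` is a maximal intersecting 3-uniform hypergraph on `n ≥ 6` vertices
containing a copy of the triangle `C₃`, then the minimum vertex cover size of
`H` is either 2 or 3: some vertex cover has at most 3 vertices, and no single
vertex covers all edges. -/
theorem tau_two_or_three {V : Type*} [Fintype V] [DecidableEq V] (n : ℕ)
    (hn : 6 ≤ n) (hcard : Fintype.card V = n)
    (H : Finset (Finset V))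
    (huniform : ∀ e ∈ H, e.card = 3)
    (hint : ∀ e ∈ H, ∀ f ∈ H, (e ∩ f).Nonempty)
    (hmax : ∀ e : Finset V, e.card = 3 → e ∉ H → ∃ f ∈ H, e ∩ f = ∅)
    (x₁ x₂ x₃ y₁ y₂ y₃ : V)
    (hnodup : ([x₁, x₂, x₃, y₁, y₂, y₃] : List V).Nodup)
    (hC₁ : ({x₁, y₃, x₂} : Finset V) ∈ H)
    (hC₂ : ({x₁, y₂, x₃} : Finset V) ∈ H)
    (hC₃ : ({x₂, y₁, x₃} : Finset V) ∈ H) :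
    (∃ T : Finset V, T.card ≤ 3 ∧ ∀ e ∈ H, (T ∩ e).Nonempty) ∧
    (∀ T : Finset V, (∀ e ∈ H, (T ∩ e).Nonempty) → 2 ≤ T.card) := by
  simp only [List.nodup_cons, List.mem_cons, List.not_mem_nil, List.nodup_nil,
    List.mem_singleton, or_false, not_or] at hnodup
  obtain ⟨⟨h12, h13, h1y1, h1y2, h1y3⟩, ⟨h23, h2y1, h2y2, h2y3⟩,
    ⟨h3y1, h3y2, h3y3⟩, ⟨hy12, hy13⟩, hy23, -⟩ := hnodup
  constructor
  · by_cases hY : ({y₁, y₂, y₃} : Finset V) ∈ H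
    · refine ⟨{y₁, y₂, y₃}, ?_, fun e he => hint _ hY e he⟩
      apply (Finset.card_insert_le _ _).trans
      apply Nat.succ_le_succ
      apply (Finset.card_insert_le _ _).trans
      simp
    · refine ⟨{x₁, x₂, x₃}, ?_, ?_⟩
      · apply (Finset.card_insert_le _ _).trans
        apply Nat.succ_le_succ
        apply (Finset.card_insert_le _ _).trans
        simp
      · intro e he
        by_contra hemp
        rw [Finset.not_nonempty_iff_eq_empty, Finset.eq_empty_iff_forall_notMem] at hemp
        have hx1 : x₁ ∉ e := fun h => hemp x₁ (by simp [h])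
        have hx2 : x₂ ∉ e := fun h => hemp x₂ (by simp [h])
        have hx3 : x₃ ∉ e := fun h => hemp x₃ (by simp [h])
        have hy3e : y₃ ∈ e := by
          obtain ⟨w, hw⟩ := hint _ hC₁ e he
          simp only [Finset.mem_inter, Finset.mem_insert, Finset.mem_singleton] at hw
          rcases hw.1 with rfl | rfl | rfl
          · exact absurd hw.2 hx1
          · exact hw.2
          · exact absurd hw.2 hx2
        have hy2e : y₂ ∈ e := by
          obtain ⟨w, hw⟩ := hint _ hC₂ e he
          simp only [Finset.mem_inter, Finset.mem_insert, Finset.mem_singleton] at hw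
          rcases hw.1 with rfl | rfl | rfl
          · exact absurd hw.2 hx1
          · exact hw.2
          · exact absurd hw.2 hx3
        have hy1e : y₁ ∈ e := by
          obtain ⟨w, hw⟩ := hint _ hC₃ e he
          simp only [Finset.mem_inter, Finset.mem_insert, Finset.mem_singleton] at hw
          rcases hw.1 with rfl | rfl | rfl
          · exact absurd hw.2 hx2
          · exact hw.2
          · exact absurd hw.2 hx3
        have hsub : ({y₁, y₂, y₃} : Finset V) ⊆ e := by
          intro v hv
          simp only [Finset.mem_insert, Finset.mem_singleton] at hv
          rcases hv with rfl | rfl | rfl <;> assumption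
        have hYcard : ({y₁, y₂, y₃} : Finset V).card = 3 := by
          rw [Finset.card_insert_of_notMem (by simp [hy12, hy13]),
            Finset.card_insert_of_notMem (by simp [hy23]), Finset.card_singleton]
        have := Finset.eq_of_subset_of_card_le hsub (by rw [huniform e he, hYcard])
        rw [this] at hY
        exact hY he
  · intro T hcov
    by_contra hlt
    push_neg at hlt
    obtain ⟨v, hv⟩ := hcov _ hC₁
    simp only [Finset.mem_inter] at hv
    have hT : T = {v} := by
      apply Finset.eq_singleton_iff_unique_mem.mpr
      refine ⟨hv.1, fun w hw => ?_⟩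
      by_contra hne
      have : ({w, v} : Finset V) ⊆ T := by
        intro u hu
        simp only [Finset.mem_insert, Finset.mem_singleton] at hu
        rcases hu with rfl | rfl
        · exact hw
        · exact hv.1
      have h2 : ({w, v} : Finset V).card = 2 := Finset.card_pair hne
      have := Finset.card_le_card this
      omega
    have hv2 : v ∈ ({x₁, y₂, x₃} : Finset V) := by
      obtain ⟨w, hw⟩ := hcov _ hC₂
      simp only [Finset.mem_inter, hT, Finset.mem_singleton] at hw
      obtain ⟨rfl, hw2⟩ := hw
      exact hw2
    have hv3 : v ∈ ({x₂, y₁, x₃} : Finset V) := by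
      obtain ⟨w, hw⟩ := hcov _ hC₃
      simp only [Finset.mem_inter, hT, Finset.mem_singleton] at hw
      obtain ⟨rfl, hw2⟩ := hw
      exact hw2
    have hv1 := hv.2
    simp only [Finset.mem_insert, Finset.mem_singleton] at hv1 hv2 hv3
    rcases hv1 with rfl | rfl | rfl <;> rcases hv2 with h | h | h <;>
      rcases hv3 with h' | h' | h' <;> simp_all
end
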